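/- arXiv:1408.2218 — 5 statements merged into one kernel-verified Lean document; each statement's English description precedes it below -/
import Mathlib

section
/- Let (M_n) be positive integers with M_{n+1} ≥ q·M_n for some q > 1, and let f : ℝ → ℝ be one-periodic of bounded variation with V(f) ≤ 1 and mean zero. Then there is a constant C depending only on q such that ∫_{[0,1)} (Σ_{n=1}^{N} f(M_n x))² dx ≤ C·(‖f‖₂² + ‖f‖₂)·N for all N. -/
/-!
Expanding the square gives `∑_{m,n} ∫₀¹ f(M_m x) f(M_n x) dx`; the diagonal terms all equal
`‖f‖₂²`. For an off-diagonal term with `a = M_m < b = M_n`, cut `[0, 1]` into the `b` periods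
`[i/b, (i+1)/b]` of `f(b·)`. Since `f(b·)` has mean zero on each of them, `f(a·)` may be replaced
there by `f(a·) - f(a i/b)`, which is bounded by the variation of `f(a·)` on that period. These
variations add up to the variation of `f` on `[0, a]`, at most `2a V(f)`, so
`|∫₀¹ f(ax) f(bx) dx| ≤ 2 (a/b) V(f) ‖f‖₁ ≤ 2 q^{-(n-m)} ‖f‖₂`. The off-diagonal terms thus decay
geometrically away from the diagonal, and each row of the expanded square contributes
`O(‖f‖₂² + ‖f‖₂ / (q - 1))`.
-/

open Real MeasureTheory Set Function
open scoped ENNReal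

theorem eVariationOn.insert_le {α E : Type*} [LinearOrder α] [PseudoEMetricSpace E] (f : α → E)
    {s : Set α} {x : α} {D : ℝ≥0∞} (hsx : ∀ y ∈ s, y ≤ x)
    (hD : ∀ y ∈ s, edist (f x) (f y) ≤ D) :
    eVariationOn f (insert x s) ≤ eVariationOn f s + D := by
  rw [eVariationOn.eVariationOn_eq_strictMonoOn]
  refine iSup_le fun ⟨n, u, hu, hus⟩ => ?_
  dsimp only
  have hun : u n ≤ x := (hus n (mem_Iic.2 le_rfl)).elim le_of_eq (hsx _)
  -- only the last point of a strictly increasing sequence in `insert x s` can be `x`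
  have hs : ∀ i < n, u i ∈ s := fun i hi => (hus i (mem_Iic.2 hi.le)).resolve_left
    ((hu (mem_Iic.2 hi.le) (mem_Iic.2 le_rfl) hi).trans_le hun).ne
  cases n with
  | zero => simp
  | succ m =>
    have hum : MonotoneOn u (Iic (m + 1)) := hu.monotoneOn
    by_cases hx : u (m + 1) = x
    · rw [Finset.sum_range_succ, hx]
      exact add_le_add
        (eVariationOn.sum_le_of_monotoneOn_Iic (hum.mono (Iic_subset_Iic.2 m.le_succ))
          fun i hi => hs i (Nat.lt_succ_of_le hi))
        (hD _ (hs m m.lt_succ_self))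
    · have hs' : ∀ i ≤ m + 1, u i ∈ s := fun i hi =>
        hi.lt_or_eq.elim (hs i) fun h => h ▸ (hus _ (mem_Iic.2 le_rfl)).resolve_left hx
      exact (eVariationOn.sum_le_of_monotoneOn_Iic hum hs').trans le_self_add

section PeriodicVariation

variable {E : Type*} [PseudoEMetricSpace E] {f : ℝ → E}

theorem Function.Periodic.edist_le_eVariationOn_Ico (hf : Periodic f 1) (x y : ℝ) :
    edist (f x) (f y) ≤ eVariationOn f (Ico 0 1) := by
  have hfract (z : ℝ) : f (Int.fract z) = f z := by
    rw [Int.fract, ← mul_one (⌊z⌋ : ℝ)]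
    exact hf.sub_int_mul_eq ⌊z⌋
  rw [← hfract x, ← hfract y]
  exact eVariationOn.edist_le f ⟨Int.fract_nonneg x, Int.fract_lt_one x⟩
    ⟨Int.fract_nonneg y, Int.fract_lt_one y⟩

theorem Function.Periodic.eVariationOn_Icc_add {c : ℝ} (hf : Periodic f c) (a b : ℝ) :
    eVariationOn f (Icc (a + c) (b + c)) = eVariationOn f (Icc a b) := by
  have := eVariationOn.comp_eq_of_monotoneOn f (· + c) ((monotone_id.add_const c).monotoneOn _)
    (t := Icc a b)
  rwa [image_add_const_Icc, show f ∘ (· + c) = f from funext hf, eq_comm] at this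

theorem Function.Periodic.eVariationOn_Icc_zero_one_le (hf : Periodic f 1) :
    eVariationOn f (Icc 0 1) ≤ 2 * eVariationOn f (Ico 0 1) := by
  rw [← Ico_insert_right zero_le_one, two_mul]
  exact eVariationOn.insert_le f (fun y hy => hy.2.le)
    (fun y _ => hf.edist_le_eVariationOn_Ico 1 y)

theorem Function.Periodic.eVariationOn_Icc_zero_natCast (hf : Periodic f 1) (a : ℕ) :
    eVariationOn f (Icc 0 a) = a * eVariationOn f (Icc 0 1) := by
  have hunit (i : ℕ) : eVariationOn f (Icc (i : ℝ) (i + 1)) = eVariationOn f (Icc 0 1) := by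
    simpa [add_comm] using (hf.nat_mul i).eVariationOn_Icc_add 0 1
  have := eVariationOn.sum' f (I := (Nat.cast : ℕ → ℝ)) Nat.mono_cast (n := a)
  simp only [Nat.cast_zero, Nat.cast_succ, hunit, Finset.sum_const, Finset.card_range,
    nsmul_eq_mul] at this
  exact this.symm

theorem Function.Periodic.eVariationOn_comp_natCast_mul_Icc_le (hf : Periodic f 1) (a : ℕ) :
    eVariationOn (fun x => f (a * x)) (Icc 0 1) ≤ 2 * a * eVariationOn f (Ico 0 1) := by
  have := eVariationOn.comp_eq_of_monotoneOn f ((a : ℝ) * ·)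
    ((monotone_mul_left_of_nonneg (Nat.cast_nonneg a)).monotoneOn _) (t := Icc 0 1)
  rw [comp_def, image_mul_left_Icc (Nat.cast_nonneg a) zero_le_one, mul_zero, mul_one,
    hf.eVariationOn_Icc_zero_natCast] at this
  rw [this, mul_comm 2, mul_assoc]
  gcongr
  exact hf.eVariationOn_Icc_zero_one_le

end PeriodicVariation

theorem Function.Periodic.abs_sub_le_eVariationOn_Ico {f : ℝ → ℝ} (hf : Periodic f 1)
    (hbv : BoundedVariationOn f (Ico 0 1)) (x y : ℝ) :
    |f x - f y| ≤ (eVariationOn f (Ico 0 1)).toReal := by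
  rw [← Real.dist_eq, dist_edist]
  exact ENNReal.toReal_mono hbv (hf.edist_le_eVariationOn_Ico x y)

theorem Function.Periodic.abs_le_abs_zero_add_eVariationOn_Ico {f : ℝ → ℝ} (hf : Periodic f 1)
    (hbv : BoundedVariationOn f (Ico 0 1)) (x : ℝ) :
    |f x| ≤ |f 0| + (eVariationOn f (Ico 0 1)).toReal := by
  have := hf.abs_sub_le_eVariationOn_Ico hbv x 0
  linarith [abs_sub_abs_le_abs_sub (f x) (f 0)]

theorem intervalIntegrable_of_abs_le {g : ℝ → ℝ} {C : ℝ} (hg : Measurable g)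
    (hC : ∀ x, |g x| ≤ C) (a b : ℝ) : IntervalIntegrable g volume a b :=
  intervalIntegrable_const.mono_fun' hg.aestronglyMeasurable (ae_of_all _ hC)

theorem intervalIntegrable_comp_mul_mul_comp_mul {f : ℝ → ℝ} {B : ℝ} (hfm : Measurable f)
    (hB : ∀ x, |f x| ≤ B) (a b s t : ℝ) :
    IntervalIntegrable (fun x => f (a * x) * f (b * x)) volume s t :=
  intervalIntegrable_of_abs_le (C := B * B) (by fun_prop) (fun x => by
    rw [abs_mul]; exact mul_le_mul (hB _) (hB _) (abs_nonneg _) ((abs_nonneg _).trans (hB 0))) s t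

theorem Function.Periodic.intervalIntegral_div_comp_natCast_mul {g : ℝ → ℝ} (hg : Periodic g 1)
    {b : ℕ} (hb : 0 < b) (i : ℕ) :
    ∫ x in (i : ℝ) / b..(i + 1) / b, g (b * x) = (b : ℝ)⁻¹ * ∫ x in 0..1, g x := by
  have hb' : (b : ℝ) ≠ 0 := by positivity
  rw [intervalIntegral.integral_comp_mul_left g hb', mul_div_cancel₀ _ hb',
    mul_div_cancel₀ _ hb', hg.intervalIntegral_add_eq i 0, zero_add, smul_eq_mul]

theorem Function.Periodic.intervalIntegral_comp_natCast_mul {g : ℝ → ℝ} (hg : Periodic g 1)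
    (hint : ∀ s t, IntervalIntegrable g volume s t) {a : ℕ} (ha : 0 < a) :
    ∫ x in 0..1, g (a * x) = ∫ x in 0..1, g x := by
  have ha' : (a : ℝ) ≠ 0 := by positivity
  have := hg.intervalIntegral_add_zsmul_eq a 0 hint
  simp only [zero_add, Int.cast_natCast, zsmul_eq_mul, mul_one] at this
  rw [intervalIntegral.integral_comp_mul_left g ha', mul_zero, mul_one, this, smul_eq_mul,
    inv_mul_cancel_left₀ ha']

theorem abs_intervalIntegral_mul_le_of_integral_eq_zero {g h : ℝ → ℝ} {c d : ℝ} (hcd : c ≤ d)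
    (hgh : IntervalIntegrable (fun x => g x * h x) volume c d)
    (hh : IntervalIntegrable h volume c d) (hmean : ∫ x in c..d, h x = 0)
    (hg : BoundedVariationOn g (Icc c d)) :
    |∫ x in c..d, g x * h x| ≤ (eVariationOn g (Icc c d)).toReal * ∫ x in c..d, |h x| := by
  have hsub : IntervalIntegrable (fun x => (g x - g c) * h x) volume c d := by
    simpa only [sub_mul] using hgh.sub (hh.const_mul (g c))
  have hshift : ∫ x in c..d, g x * h x = ∫ x in c..d, (g x - g c) * h x := by
    simp only [sub_mul]
    rw [intervalIntegral.integral_sub hgh (hh.const_mul _), intervalIntegral.integral_const_mul,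
      hmean, mul_zero, sub_zero]
  rw [hshift, ← intervalIntegral.integral_const_mul]
  refine (intervalIntegral.abs_integral_le_integral_abs hcd).trans
    (intervalIntegral.integral_mono_on hcd hsub.abs (hh.abs.const_mul _) fun x hx => ?_)
  rw [abs_mul, ← Real.dist_eq]
  exact mul_le_mul_of_nonneg_right (hg.dist_le hx (left_mem_Icc.2 hcd)) (abs_nonneg _)

theorem sq_intervalIntegral_le_intervalIntegral_sq {g : ℝ → ℝ}
    (hg : IntervalIntegrable g volume 0 1)
    (hg2 : IntervalIntegrable (fun x => g x ^ 2) volume 0 1) :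
    (∫ x in 0..1, g x) ^ 2 ≤ ∫ x in 0..1, g x ^ 2 := by
  set A := ∫ x in 0..1, g x
  have hvar : ∫ x in 0..1, (g x - A) ^ 2 = (∫ x in 0..1, g x ^ 2) - A ^ 2 := by
    have hexp : (fun x => (g x - A) ^ 2) = fun x => g x ^ 2 - 2 * A * g x + A ^ 2 := by
      funext x; ring
    rw [hexp, intervalIntegral.integral_add (hg2.sub (hg.const_mul _)) intervalIntegrable_const,
      intervalIntegral.integral_sub hg2 (hg.const_mul _), intervalIntegral.integral_const_mul]
    simp only [intervalIntegral.integral_const, sub_zero, one_smul]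
    ring
  have := intervalIntegral.integral_nonneg (μ := volume) zero_le_one fun x _ => sq_nonneg (g x - A)
  linarith

theorem intervalIntegral_abs_le_sqrt_intervalIntegral_sq {g : ℝ → ℝ}
    (hg : IntervalIntegrable g volume 0 1)
    (hg2 : IntervalIntegrable (fun x => g x ^ 2) volume 0 1) :
    ∫ x in 0..1, |g x| ≤ √(∫ x in 0..1, g x ^ 2) := by
  refine Real.le_sqrt_of_sq_le ?_
  simpa only [sq_abs] using sq_intervalIntegral_le_intervalIntegral_sq hg.abs
    (by simpa only [sq_abs] using hg2)

theorem intervalIntegral_sq_sum {ι : Type*} (S : Finset ι) {g : ι → ℝ → ℝ} {a b : ℝ}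
    (hg : ∀ m n, IntervalIntegrable (fun x => g m x * g n x) volume a b) :
    ∫ x in a..b, (∑ n ∈ S, g n x) ^ 2 = ∑ m ∈ S, ∑ n ∈ S, ∫ x in a..b, g m x * g n x := by
  simp_rw [sq, Finset.sum_mul_sum]
  have hrow (m : ι) : IntervalIntegrable (fun x => ∑ n ∈ S, g m x * g n x) volume a b := by
    simpa only [Finset.sum_fn] using IntervalIntegrable.sum S fun n _ => hg m n
  rw [intervalIntegral.integral_finsetSum fun m _ => hrow m]
  exact Finset.sum_congr rfl fun m _ => intervalIntegral.integral_finsetSum fun n _ => hg m n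

theorem Function.Periodic.abs_intervalIntegral_mul_comp_natCast_mul_le {f g : ℝ → ℝ} {B : ℝ}
    (hf : Periodic f 1) (hfm : Measurable f) (hB : ∀ x, |f x| ≤ B)
    (hmean : ∫ x in 0..1, f x = 0) (hg : BoundedVariationOn g (Icc 0 1)) {b : ℕ} (hb : 0 < b)
    (hgf : ∀ s t, IntervalIntegrable (fun x => g x * f (b * x)) volume s t) :
    |∫ x in 0..1, g x * f (b * x)| ≤
      (eVariationOn g (Icc 0 1)).toReal * ((b : ℝ)⁻¹ * ∫ x in 0..1, |f x|) := by
  set A := ∫ x in 0..1, |f x|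
  have hbR : (0 : ℝ) < b := by positivity
  -- cut `[0, 1]` into the `b` periods `[i / b, (i + 1) / b]` of `f (b * x)`
  set c : ℕ → ℝ := fun i => i / b
  have hc : Monotone c := fun i j hij => div_le_div_of_nonneg_right (Nat.cast_le.2 hij) hbR.le
  have hcsucc (i : ℕ) : c (i + 1) = (i + 1) / b := by simp [c]
  have hcut : ∫ x in 0..1, g x * f (b * x) =
      ∑ i ∈ Finset.range b, ∫ x in c i..c (i + 1), g x * f (b * x) := by
    rw [intervalIntegral.sum_integral_adjacent_intervals fun i _ => hgf _ _]
    simp [c, hbR.ne']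
  set W : ℕ → ℝ≥0∞ := fun i => eVariationOn g (Icc (c i) (c (i + 1)))
  have hWsum : ∑ i ∈ Finset.range b, W i = eVariationOn g (Icc 0 1) := by
    rw [eVariationOn.sum' _ hc]
    simp [c, hbR.ne']
  have hWi {i : ℕ} (hi : i ∈ Finset.range b) : W i ≠ ⊤ :=
    ne_top_of_le_ne_top hg (hWsum ▸ Finset.single_le_sum (fun _ _ => bot_le) hi)
  have hblock {i : ℕ} (hi : i ∈ Finset.range b) :
      |∫ x in c i..c (i + 1), g x * f (b * x)| ≤ (W i).toReal * ((b : ℝ)⁻¹ * A) := by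
    have hmean_i : ∫ x in c i..c (i + 1), f (b * x) = 0 := by
      rw [hcsucc, hf.intervalIntegral_div_comp_natCast_mul hb, hmean, mul_zero]
    have habs_i : ∫ x in c i..c (i + 1), |f (b * x)| = (b : ℝ)⁻¹ * A := by
      rw [hcsucc]
      exact (hf.comp fun y => |y|).intervalIntegral_div_comp_natCast_mul hb i
    rw [← habs_i]
    exact abs_intervalIntegral_mul_le_of_integral_eq_zero (hc i.le_succ) (hgf _ _)
      (intervalIntegrable_of_abs_le (by fun_prop) (fun x => hB (b * x)) _ _) hmean_i (hWi hi)
  calc |∫ x in 0..1, g x * f (b * x)|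
      ≤ ∑ i ∈ Finset.range b, |∫ x in c i..c (i + 1), g x * f (b * x)| := by
        rw [hcut]; exact Finset.abs_sum_le_sum_abs _ _
    _ ≤ ∑ i ∈ Finset.range b, (W i).toReal * ((b : ℝ)⁻¹ * A) :=
        Finset.sum_le_sum fun i hi => hblock hi
    _ = (eVariationOn g (Icc 0 1)).toReal * ((b : ℝ)⁻¹ * A) := by
        rw [← Finset.sum_mul, ← ENNReal.toReal_sum fun i hi => hWi hi, hWsum]

theorem Function.Periodic.abs_intervalIntegral_comp_mul_mul_comp_mul_le {f : ℝ → ℝ}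
    (hf : Periodic f 1) (hfm : Measurable f) (hbv : BoundedVariationOn f (Ico 0 1))
    (hmean : ∫ x in 0..1, f x = 0) (a : ℕ) {b : ℕ} (hb : 0 < b) :
    |∫ x in 0..1, f (a * x) * f (b * x)| ≤
      2 * (a / b) * (eVariationOn f (Ico 0 1)).toReal * ∫ x in 0..1, |f x| := by
  have hB := hf.abs_le_abs_zero_add_eVariationOn_Ico hbv
  have hvar := hf.eVariationOn_comp_natCast_mul_Icc_le a
  have hfin : 2 * (a : ℝ≥0∞) * eVariationOn f (Ico 0 1) ≠ ⊤ :=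
    ENNReal.mul_ne_top (ENNReal.mul_ne_top ENNReal.ofNat_ne_top (ENNReal.natCast_ne_top a)) hbv
  have hA : 0 ≤ ∫ x in 0..1, |f x| :=
    intervalIntegral.integral_nonneg zero_le_one fun x _ => abs_nonneg _
  calc |∫ x in 0..1, f (a * x) * f (b * x)|
      ≤ (eVariationOn (fun x => f (a * x)) (Icc 0 1)).toReal *
          ((b : ℝ)⁻¹ * ∫ x in 0..1, |f x|) :=
        hf.abs_intervalIntegral_mul_comp_natCast_mul_le hfm hB hmean
          (ne_top_of_le_ne_top hfin hvar) hb (intervalIntegrable_comp_mul_mul_comp_mul hfm hB a b)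
    _ ≤ 2 * a * (eVariationOn f (Ico 0 1)).toReal * ((b : ℝ)⁻¹ * ∫ x in 0..1, |f x|) := by
        gcongr
        simpa using ENNReal.toReal_mono hfin hvar
    _ = 2 * (a / b) * (eVariationOn f (Ico 0 1)).toReal * ∫ x in 0..1, |f x| := by ring

theorem pow_mul_le_of_mul_le_succ {u : ℕ → ℝ} {q : ℝ} (hq : 0 ≤ q)
    (hu : ∀ n, q * u n ≤ u (n + 1)) (m d : ℕ) : q ^ d * u m ≤ u (m + d) := by
  induction d with
  | zero => simp
  | succ d ih =>
    calc q ^ (d + 1) * u m = q * (q ^ d * u m) := by ring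
      _ ≤ q * u (m + d) := mul_le_mul_of_nonneg_left ih hq
      _ ≤ u (m + d + 1) := hu _

theorem div_le_inv_pow_of_mul_le_succ {u : ℕ → ℝ} {q : ℝ} (hq : 0 < q) (hu0 : ∀ n, 0 < u n)
    (hu : ∀ n, q * u n ≤ u (n + 1)) {m n : ℕ} (hmn : m ≤ n) : u m / u n ≤ q⁻¹ ^ (n - m) := by
  have := pow_mul_le_of_mul_le_succ hq.le hu m (n - m)
  rw [Nat.add_sub_cancel' hmn] at this
  rw [div_le_iff₀ (hu0 n), inv_pow, inv_mul_eq_div, le_div_iff₀ (by positivity), mul_comm]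
  exact this

theorem sum_pow_le_of_injOn {r : ℝ} (hr0 : 0 ≤ r) (hr1 : r < 1) {T : Finset ℕ} {δ : ℕ → ℕ}
    (hδ : Set.InjOn δ T) (hδ1 : ∀ n ∈ T, 1 ≤ δ n) : ∑ n ∈ T, r ^ δ n ≤ r / (1 - r) := by
  rw [← Finset.sum_image hδ]
  set D := T.image δ
  have hD : D ⊆ Finset.Ico 1 (D.sup id + 1) := fun d hd => by
    obtain ⟨n, hn, rfl⟩ := Finset.mem_image.1 hd
    exact Finset.mem_Ico.2 ⟨hδ1 n hn, Nat.lt_succ_of_le (Finset.le_sup (f := id) hd)⟩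
  calc ∑ d ∈ D, r ^ d ≤ ∑ d ∈ Finset.Ico 1 (D.sup id + 1), r ^ d :=
        Finset.sum_le_sum_of_subset_of_nonneg hD fun _ _ _ => pow_nonneg hr0 _
    _ ≤ r ^ 1 / (1 - r) := geom_sum_Ico_le_of_lt_one hr0 hr1
    _ = r / (1 - r) := by rw [pow_one]

theorem sum_sum_le_of_abs_le_geometric {G : ℕ → ℕ → ℝ} {D K r : ℝ} (hr0 : 0 ≤ r) (hr1 : r < 1)
    (hK : 0 ≤ K) (hsymm : ∀ m n, G m n = G n m) (hdiag : ∀ m, G m m ≤ D)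
    (hoff : ∀ m n, m < n → |G m n| ≤ K * r ^ (n - m)) (S : Finset ℕ) :
    ∑ m ∈ S, ∑ n ∈ S, G m n ≤ (D + 2 * K * (r / (1 - r))) * S.card := by
  have hside {T : Finset ℕ} {δ : ℕ → ℕ} (hδ : Set.InjOn δ T) (hδ1 : ∀ n ∈ T, 1 ≤ δ n) :
      ∑ n ∈ T, K * r ^ δ n ≤ K * (r / (1 - r)) := by
    rw [← Finset.mul_sum]
    exact mul_le_mul_of_nonneg_left (sum_pow_le_of_injOn hr0 hr1 hδ hδ1) hK
  have hrow (m : ℕ) (hm : m ∈ S) : ∑ n ∈ S, G m n ≤ D + 2 * K * (r / (1 - r)) := by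
    rw [← Finset.add_sum_erase S _ hm,
      ← Finset.sum_filter_add_sum_filter_not (S.erase m) (· < m)]
    have hlow : ∑ n ∈ (S.erase m).filter (· < m), G m n ≤ K * (r / (1 - r)) := by
      refine (Finset.sum_le_sum fun n hn => ?_).trans
        (hside (δ := (m - ·)) (fun x hx y hy h => ?_) fun n hn => ?_)
      · rw [hsymm]
        exact (le_abs_self _).trans (hoff n m (Finset.mem_filter.1 hn).2)
      · have := (Finset.mem_filter.1 hx).2; have := (Finset.mem_filter.1 hy).2
        simp only at h; omega
      · have := (Finset.mem_filter.1 hn).2; omega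
    have hhigh : ∑ n ∈ (S.erase m).filter (¬ · < m), G m n ≤ K * (r / (1 - r)) := by
      have hlt {n : ℕ} (hn : n ∈ (S.erase m).filter (¬ · < m)) : m < n := by
        rw [Finset.mem_filter, Finset.mem_erase] at hn; omega
      refine (Finset.sum_le_sum fun n hn => ?_).trans
        (hside (δ := (· - m)) (fun x hx y hy h => ?_) fun n hn => ?_)
      · exact (le_abs_self _).trans (hoff m n (hlt hn))
      · have := hlt hx; have := hlt hy; simp only at h; omega
      · have := hlt hn; omega
    linarith [hdiag m]
  calc ∑ m ∈ S, ∑ n ∈ S, G m n ≤ S.card • (D + 2 * K * (r / (1 - r))) :=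
        Finset.sum_le_card_nsmul _ _ _ hrow
    _ = _ := by rw [nsmul_eq_mul, mul_comm]

theorem Function.Periodic.intervalIntegral_sq_sum_comp_mul_le {f : ℝ → ℝ} (hf : Periodic f 1)
    (hfm : Measurable f) (hbv : BoundedVariationOn f (Ico 0 1)) (hmean : ∫ x in 0..1, f x = 0)
    {q : ℝ} (hq : 1 < q) {M : ℕ → ℕ} (hMpos : ∀ n, 0 < M n) (hM : ∀ n, q * M n ≤ M (n + 1))
    (S : Finset ℕ) :
    ∫ x in 0..1, (∑ n ∈ S, f (M n * x)) ^ 2 ≤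
      ((∫ x in 0..1, f x ^ 2) +
        4 / (q - 1) * (eVariationOn f (Ico 0 1)).toReal * ∫ x in 0..1, |f x|) * S.card := by
  set V := (eVariationOn f (Ico 0 1)).toReal
  set A := ∫ x in 0..1, |f x|
  have hA : 0 ≤ A := intervalIntegral.integral_nonneg zero_le_one fun x _ => abs_nonneg _
  have hprod := intervalIntegrable_comp_mul_mul_comp_mul hfm
    (hf.abs_le_abs_zero_add_eVariationOn_Ico hbv)
  set G : ℕ → ℕ → ℝ := fun m n => ∫ x in 0..1, f (M m * x) * f (M n * x)
  have hdiag (m : ℕ) : G m m ≤ ∫ x in 0..1, f x ^ 2 := by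
    simp only [G, sq]
    exact ((hf.mul hf).intervalIntegral_comp_natCast_mul
      (by simpa only [one_mul, Pi.mul_def] using hprod 1 1) (hMpos m)).le
  have hoff (m n : ℕ) (hmn : m < n) : |G m n| ≤ 2 * V * A * q⁻¹ ^ (n - m) := by
    calc |G m n| ≤ 2 * ((M m : ℝ) / M n) * V * A :=
          hf.abs_intervalIntegral_comp_mul_mul_comp_mul_le hfm hbv hmean _ (hMpos n)
      _ ≤ 2 * q⁻¹ ^ (n - m) * V * A := by
          gcongr
          exact div_le_inv_pow_of_mul_le_succ (by linarith) (fun n => Nat.cast_pos.2 (hMpos n))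
            hM hmn.le
      _ = 2 * V * A * q⁻¹ ^ (n - m) := by ring
  rw [intervalIntegral_sq_sum _ fun m n => hprod _ _ 0 1]
  convert sum_sum_le_of_abs_le_geometric (by positivity) (inv_lt_one_of_one_lt₀ hq)
    (by positivity) (fun m n => by simp only [G, mul_comm]) hdiag hoff S using 3
  have : q - 1 ≠ 0 := (sub_pos.2 hq).ne'
  field_simp
  ring

/-- Second moment bound for lacunary sums: for a Hadamard lacunary sequence with ratio
`q > 1` and a one-periodic, mean-zero function of total variation at most `1`,
`∫₀¹ (Σ_{n=1}^N f(M_n x))² dx ≤ C(‖f‖₂² + ‖f‖₂)·N` with `C` depending only on `q`. -/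
theorem stmt_9 (q : ℝ) (hq : 1 < q) :
    ∃ C > (0 : ℝ), ∀ (M : ℕ → ℕ), (∀ n, 0 < M n) → (∀ n, q * M n ≤ M (n + 1)) →
      ∀ f : ℝ → ℝ, Measurable f →
        (∀ x : ℝ, f (x + 1) = f x) →
        eVariationOn f (Set.Ico (0 : ℝ) 1) ≤ 1 →
        (∫ x in (0:ℝ)..1, f x) = 0 →
        ∀ N : ℕ,
          (∫ x in (0:ℝ)..1, (∑ n ∈ Finset.Icc 1 N, f ((M n : ℝ) * x)) ^ 2) ≤
            C * ((∫ x in (0:ℝ)..1, f x ^ 2) + Real.sqrt (∫ x in (0:ℝ)..1, f x ^ 2)) * N := by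
  have hq1 : 0 < q - 1 := sub_pos.2 hq
  refine ⟨1 + 4 / (q - 1), by positivity, ?_⟩
  intro M hMpos hM f hfm (hf : Periodic f 1) hvar hmean N
  have hbv : BoundedVariationOn f (Ico 0 1) := ne_top_of_le_ne_top ENNReal.one_ne_top hvar
  have hV : (eVariationOn f (Ico 0 1)).toReal ≤ 1 :=
    ENNReal.toReal_le_of_le_ofReal zero_le_one (by simpa using hvar)
  have hB := hf.abs_le_abs_zero_add_eVariationOn_Ico hbv
  have hL1 := intervalIntegral_abs_le_sqrt_intervalIntegral_sq
    (intervalIntegrable_of_abs_le hfm hB 0 1)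
    (by simpa only [one_mul, ← sq] using intervalIntegrable_comp_mul_mul_comp_mul hfm hB 1 1 0 1)
  have hA : 0 ≤ ∫ x in (0:ℝ)..1, |f x| :=
    intervalIntegral.integral_nonneg zero_le_one fun x _ => abs_nonneg _
  have hI2 : 0 ≤ ∫ x in (0:ℝ)..1, f x ^ 2 :=
    intervalIntegral.integral_nonneg zero_le_one fun x _ => sq_nonneg _
  have hVA := (mul_le_of_le_one_left hA hV).trans hL1
  calc _ ≤ _ := hf.intervalIntegral_sq_sum_comp_mul_le hfm hbv hmean hq hMpos hM _
    _ ≤ _ := by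
      rw [Nat.card_Icc, Nat.add_sub_cancel, mul_assoc (4 / (q - 1))]
      gcongr
      have hc : 0 ≤ 4 / (q - 1) := by positivity
      nlinarith [mul_le_mul_of_nonneg_left hVA hc, mul_nonneg hc hI2, Real.sqrt_nonneg
        (∫ x in (0:ℝ)..1, f x ^ 2)]
end

section
/- Let (M_n) be positive integers with M_{n+1}/M_n → ∞ as n → ∞. Then for every K ∈ ℕ, C > 0 and ε > 0, Σ_{1≤n'<n≤2N} Σ_{j,j'=1}^{N^K} (jj')^{-1} · 1[ |j·M_n − j'·M_{n'}| < (1/2)·q^{-C·N^{1−ε}}·M_{n'} ] = o(N) as N → ∞, where q > 1 is any Hadamard ratio for (M_n). -/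
/-!
For `n' < n` we have `M_{n'} ≤ M_n`, and the threshold `δ = ½ q^{-C N^{1-ε}}` is at most `1/2`.
Hence for each `j` at most one `j'` satisfies `|j M_n - j' M_{n'}| < δ M_{n'}`, and that `j'` is
at least `j M_n / (2 M_{n'})`; summing `(j j')⁻¹` over `j, j'` gives at most `4 M_{n'} / M_n`,
whatever the range of `j, j'`. If `M_{m+1} ≥ ρ M_m` for all `m ≥ n'`, summing over `n > n'` gives
at most `4 / (ρ - 1)`. Take `ρ = q` for the first `n₀` indices `n'` and `ρ = R` for the others,
where `R` is arbitrarily large and `n₀` depends on `R`: the total is at most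
`4 n₀ / (q - 1) + 8 N / (R - 1)`, which is `o(N)`.
-/

open Real Filter Asymptotics
open Finset

lemma sum_Icc_inv_sq_le_two (P : ℕ) : ∑ j ∈ Icc 1 P, ((j : ℝ) ^ 2)⁻¹ ≤ 2 := by
  have h : Icc 1 P = Ioo 0 (P + 1) := by ext; simp; omega
  simpa [h] using sum_Ioo_inv_sq_le (α := ℝ) 0 (P + 1)

lemma eq_of_abs_sub_mul_lt {c B δ : ℝ} (hB : 0 < B) (hδ : δ ≤ 1 / 2) {x y : ℕ}
    (hx : |c - x * B| < δ * B) (hy : |c - y * B| < δ * B) : x = y := by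
  have hxy : |((x : ℝ) - y) * B| < B := by
    calc |((x : ℝ) - y) * B| = |(c - y * B) - (c - x * B)| := by ring_nf
      _ ≤ |c - y * B| + |c - x * B| := abs_sub _ _
      _ < δ * B + δ * B := add_lt_add hy hx
      _ ≤ B := by nlinarith
  rw [abs_mul, abs_of_pos hB, mul_lt_iff_lt_one_left hB, abs_lt] at hxy
  obtain ⟨h₁, h₂⟩ := hxy
  have : (x : ℤ) - y < 1 := by exact_mod_cast h₂
  have : -1 < (x : ℤ) - y := by exact_mod_cast h₁
  omega

lemma sum_inv_mul_near_le (P j : ℕ) (hj1 : 1 ≤ j) {A B δ : ℝ} (hB : 0 < B) (hBA : B ≤ A)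
    (hδ : δ ≤ 1 / 2) :
    ∑ j' ∈ Icc 1 P, (if |(j : ℝ) * A - (j' : ℝ) * B| < δ * B then ((j : ℝ) * j')⁻¹ else 0)
      ≤ 2 * B / (j ^ 2 * A) := by
  have hj : (1 : ℝ) ≤ j := by exact_mod_cast hj1
  have hA : 0 < A := hB.trans_le hBA
  rw [← sum_filter]
  set S := (Icc 1 P).filter (fun j' : ℕ => |(j : ℝ) * A - (j' : ℝ) * B| < δ * B)
  have hcard : #S ≤ 1 :=
    card_le_one.mpr fun x hx y hy =>
      eq_of_abs_sub_mul_lt hB hδ (mem_filter.mp hx).2 (mem_filter.mp hy).2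
  have hterm : ∀ j' ∈ S, ((j : ℝ) * j')⁻¹ ≤ 2 * B / (j ^ 2 * A) := by
    intro j' hj'
    obtain ⟨hj'P, hnear⟩ := mem_filter.mp hj'
    have hj'1 : (1 : ℝ) ≤ j' := by exact_mod_cast (mem_Icc.mp hj'P).1
    replace hnear := (abs_lt.mp hnear).2
    have hj'A : j * A ≤ 2 * j' * B := by nlinarith
    rw [← one_div, div_le_div_iff₀ (by positivity) (by positivity)]
    nlinarith
  calc _ ≤ #S • (2 * B / (j ^ 2 * A)) := sum_le_card_nsmul _ _ _ hterm
    _ ≤ 1 • (2 * B / (j ^ 2 * A)) := nsmul_le_nsmul_left (by positivity) hcard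
    _ = 2 * B / (j ^ 2 * A) := one_nsmul _

lemma sum_sum_inv_mul_near_le (P : ℕ) {A B δ : ℝ} (hB : 0 < B) (hBA : B ≤ A) (hδ : δ ≤ 1 / 2) :
    ∑ j ∈ Icc 1 P, ∑ j' ∈ Icc 1 P,
      (if |(j : ℝ) * A - (j' : ℝ) * B| < δ * B then ((j : ℝ) * j')⁻¹ else 0) ≤ 4 * B / A := by
  have hA : 0 < A := hB.trans_le hBA
  calc _ ≤ ∑ j ∈ Icc 1 P, 2 * B / A * ((j : ℝ) ^ 2)⁻¹ := by
        refine sum_le_sum fun j hj => ?_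
        exact (sum_inv_mul_near_le P j (mem_Icc.mp hj).1 hB hBA hδ).trans_eq (by ring)
    _ = 2 * B / A * ∑ j ∈ Icc 1 P, ((j : ℝ) ^ 2)⁻¹ := (mul_sum _ _ _).symm
    _ ≤ 2 * B / A * 2 := by gcongr; exact sum_Icc_inv_sq_le_two P
    _ = 4 * B / A := by ring

lemma pow_mul_le_of_forall_mul_le {f : ℕ → ℝ} {ρ : ℝ} (hρ : 0 ≤ ρ) {a : ℕ}
    (h : ∀ m ≥ a, ρ * f m ≤ f (m + 1)) (k : ℕ) : ρ ^ k * f a ≤ f (a + k) := by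
  induction k with
  | zero => simp
  | succ k ih =>
    calc ρ ^ (k + 1) * f a = ρ * (ρ ^ k * f a) := by ring
      _ ≤ ρ * f (a + k) := by gcongr
      _ ≤ f (a + k + 1) := h _ (Nat.le_add_right a k)

lemma sum_Ioc_div_le_of_forall_mul_le {f : ℕ → ℝ} {ρ : ℝ} (hρ : 1 < ρ) {a : ℕ} (hfa : 0 ≤ f a)
    (h : ∀ m ≥ a, ρ * f m ≤ f (m + 1)) (L : ℕ) :
    ∑ n ∈ Ioc a L, f a / f n ≤ (ρ - 1)⁻¹ := by
  have hρ0 : 0 < ρ := zero_lt_one.trans hρ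
  have hterm : ∀ n ∈ Ioc a L, f a / f n ≤ ρ ^ a * ρ⁻¹ ^ n := by
    intro n hn
    obtain ⟨k, rfl⟩ := Nat.exists_eq_add_of_le (mem_Ioc.mp hn).1.le
    have hgrow := pow_mul_le_of_forall_mul_le hρ0.le h k
    have hk : ρ ^ a * ρ⁻¹ ^ (a + k) = (ρ ^ k)⁻¹ := by
      rw [pow_add, ← mul_assoc, inv_pow, mul_inv_cancel₀ (by positivity), one_mul, inv_pow]
    rw [hk]
    refine div_le_of_le_mul₀ ((by positivity : 0 ≤ ρ ^ k * f a).trans hgrow) (by positivity) ?_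
    rwa [← div_eq_inv_mul, le_div_iff₀' (by positivity)]
  calc _ ≤ ∑ n ∈ Ioc a L, ρ ^ a * ρ⁻¹ ^ n := sum_le_sum hterm
    _ = ρ ^ a * ∑ n ∈ Ico (a + 1) (L + 1), ρ⁻¹ ^ n := by
        rw [← mul_sum, Ico_add_one_add_one_eq_Ioc]
    _ ≤ ρ ^ a * (ρ⁻¹ ^ (a + 1) / (1 - ρ⁻¹)) := by
        gcongr; exact geom_sum_Ico_le_of_lt_one (by positivity) (inv_lt_one_of_one_lt₀ hρ)
    _ = (ρ - 1)⁻¹ := by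
        rw [← mul_div_assoc, pow_succ, ← mul_assoc, inv_pow, mul_inv_cancel₀ (by positivity),
          one_mul]
        field_simp

lemma sum_le_mul_add_mul_of_forall_ge_le {s : Finset ℕ} {L : ℕ} (hs : #s ≤ L) {t : ℕ → ℝ}
    {a b : ℝ} (ha : 0 ≤ a) (hb : 0 ≤ b) {n₀ : ℕ} (hta : ∀ n, t n ≤ a)
    (htb : ∀ n ≥ n₀, t n ≤ b) : ∑ n ∈ s, t n ≤ n₀ * a + L * b := by
  rw [← sum_filter_add_sum_filter_not s (· < n₀)]
  have hsmall : #{n ∈ s | n < n₀} ≤ n₀ := by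
    simpa using card_le_card (fun n hn => mem_range.mpr (mem_filter.mp hn).2 :
      {n ∈ s | n < n₀} ⊆ range n₀)
  have hlarge : #{n ∈ s | ¬n < n₀} ≤ L := (card_filter_le _ _).trans hs
  gcongr
  · calc _ ≤ #{n ∈ s | n < n₀} • a := sum_le_card_nsmul _ _ _ fun n _ => hta n
      _ ≤ n₀ * a := by rw [nsmul_eq_mul]; gcongr
  · calc _ ≤ #{n ∈ s | ¬n < n₀} • b :=
          sum_le_card_nsmul _ _ _ fun n hn => htb n (not_lt.mp (mem_filter.mp hn).2)
      _ ≤ L * b := by rw [nsmul_eq_mul]; gcongr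

lemma sum_near_solutions_le (M : ℕ → ℝ) (hM : ∀ n, 0 < M n) (hmono : Monotone M) {δ : ℝ}
    (hδ : δ ≤ 1 / 2) (P L : ℕ) :
    ∑ n ∈ Icc 1 L, ∑ n' ∈ Ico 1 n, ∑ j ∈ Icc 1 P, ∑ j' ∈ Icc 1 P,
      (if |(j : ℝ) * M n - (j' : ℝ) * M n'| < δ * M n' then ((j : ℝ) * j')⁻¹ else 0)
      ≤ 4 * ∑ n' ∈ Ico 1 L, ∑ n ∈ Ioc n' L, M n' / M n := by
  calc _ ≤ ∑ n ∈ Icc 1 L, ∑ n' ∈ Ico 1 n, 4 * M n' / M n :=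
        sum_le_sum fun n _ => sum_le_sum fun n' hn' =>
          sum_sum_inv_mul_near_le P (hM n') (hmono (mem_Ico.mp hn').2.le) hδ
    _ = ∑ n' ∈ Ico 1 L, ∑ n ∈ Ioc n' L, 4 * M n' / M n :=
        sum_comm' fun n n' => by simp only [mem_Icc, mem_Ico, mem_Ioc]; omega
    _ = 4 * ∑ n' ∈ Ico 1 L, ∑ n ∈ Ioc n' L, M n' / M n := by
        simp only [mul_sum, mul_div_assoc]

lemma exists_sum_Ico_sum_Ioc_div_le (M : ℕ → ℝ) (hM : ∀ n, 0 < M n) {q : ℝ} (hq : 1 < q)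
    (hlac : ∀ n, q * M n ≤ M (n + 1)) (hsuper : Tendsto (fun n => M (n + 1) / M n) atTop atTop)
    {η : ℝ} (hη : 0 < η) :
    ∃ A, ∀ L : ℕ, ∑ n' ∈ Ico 1 L, ∑ n ∈ Ioc n' L, M n' / M n ≤ A + η * L := by
  set R := 1 + η⁻¹
  have hR : 1 < R := lt_add_of_pos_right 1 (inv_pos.mpr hη)
  obtain ⟨n₀, hn₀⟩ := eventually_atTop.mp (hsuper.eventually_ge_atTop R)
  refine ⟨n₀ * (q - 1)⁻¹, fun L => ?_⟩
  calc _ ≤ n₀ * (q - 1)⁻¹ + L * (R - 1)⁻¹ :=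
        sum_le_mul_add_mul_of_forall_ge_le (by simp) (inv_nonneg.mpr (by linarith))
          (inv_nonneg.mpr (by linarith))
          (fun n' => sum_Ioc_div_le_of_forall_mul_le hq (hM n').le (fun m _ => hlac m) L)
          (fun n' hn' => sum_Ioc_div_le_of_forall_mul_le hR (hM n').le
            (fun m hm => (le_div_iff₀ (hM m)).mp (hn₀ m (hn'.trans hm))) L)
    _ = n₀ * (q - 1)⁻¹ + η * L := by rw [add_sub_cancel_left, inv_inv, mul_comm (L : ℝ)]

lemma isLittleO_natCast_of_forall_le_add {f : ℕ → ℝ} (hf : ∀ N, 0 ≤ f N)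
    (h : ∀ η > 0, ∃ A, ∀ N, f N ≤ A + η * N) : f =o[atTop] (fun N : ℕ => (N : ℝ)) := by
  refine isLittleO_iff.mpr fun c hc => ?_
  obtain ⟨A, hA⟩ := h (c / 2) (half_pos hc)
  filter_upwards [(tendsto_natCast_atTop_atTop.const_mul_atTop (half_pos hc)).eventually_ge_atTop A]
    with N hN
  rw [Real.norm_of_nonneg (hf N), Real.norm_natCast]
  linarith [hA N]

theorem stmt_12_general (M : ℕ → ℕ) (hMpos : ∀ n, 0 < M n)
    (hsuper : Tendsto (fun n => (M (n + 1) : ℝ) / (M n : ℝ)) atTop atTop)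
    (q : ℝ) (hq : 1 < q) (hlac : ∀ n, q * M n ≤ M (n + 1))
    (K : ℕ) (C : ℝ) (hC : 0 < C) (ε : ℝ) :
    (fun N : ℕ =>
        ∑ n ∈ Finset.Icc 1 (2 * N), ∑ n' ∈ Finset.Ico 1 n,
          ∑ j ∈ Finset.Icc 1 (N ^ K), ∑ j' ∈ Finset.Icc 1 (N ^ K),
            if |(j : ℝ) * M n - (j' : ℝ) * M n'| <
                (1 / 2) * q ^ (-(C * (N : ℝ) ^ ((1 : ℝ) - ε))) * M n'
            then ((j : ℝ) * (j' : ℝ))⁻¹ else 0) =o[atTop] (fun N : ℕ => (N : ℝ)) := by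
  have hM : ∀ n, (0 : ℝ) < M n := fun n => mod_cast hMpos n
  have hmono : Monotone (fun n => (M n : ℝ)) :=
    monotone_nat_of_le_succ fun n => (le_mul_of_one_le_left (hM n).le hq.le).trans (hlac n)
  have hδ : ∀ N : ℕ, (1 / 2) * q ^ (-(C * (N : ℝ) ^ ((1 : ℝ) - ε))) ≤ 1 / 2 := fun N =>
    mul_le_of_le_one_right (by norm_num) (rpow_le_one_of_one_le_of_nonpos hq.le
      (neg_nonpos.mpr (by positivity)))
  refine isLittleO_natCast_of_forall_le_add (fun N => by positivity) fun η hη => ?_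
  obtain ⟨A, hA⟩ := exists_sum_Ico_sum_Ioc_div_le _ hM hq hlac hsuper (by positivity : 0 < η / 8)
  refine ⟨4 * A, fun N => ?_⟩
  calc _ ≤ 4 * ∑ n' ∈ Ico 1 (2 * N), ∑ n ∈ Ioc n' (2 * N), (M n' : ℝ) / M n :=
        sum_near_solutions_le _ hM hmono (hδ N) _ _
    _ ≤ 4 * (A + η / 8 * (2 * N : ℕ)) := by gcongr; exact hA _
    _ = 4 * A + η * N := by push_cast; ring

/-- For a superlacunary sequence (`M_{n+1}/M_n → ∞`), the Diophantine counting condition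
(251) of the paper holds: the weighted count of near-solutions is `o(N)`. -/
theorem stmt_12 (M : ℕ → ℕ) (hMpos : ∀ n, 0 < M n)
    (hsuper : Tendsto (fun n => (M (n + 1) : ℝ) / (M n : ℝ)) atTop atTop)
    (q : ℝ) (hq : 1 < q) (hlac : ∀ n, q * M n ≤ M (n + 1))
    (K : ℕ) (hK : 1 ≤ K) (C : ℝ) (hC : 0 < C) (ε : ℝ) (hε : 0 < ε) :
    (fun N : ℕ =>
        ∑ n ∈ Finset.Icc 1 (2 * N), ∑ n' ∈ Finset.Ico 1 n,
          ∑ j ∈ Finset.Icc 1 (N ^ K), ∑ j' ∈ Finset.Icc 1 (N ^ K),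
            if |(j : ℝ) * M n - (j' : ℝ) * M n'| <
                (1 / 2) * q ^ (-(C * (N : ℝ) ^ ((1 : ℝ) - ε))) * M n'
            then ((j : ℝ) * (j' : ℝ))⁻¹ else 0) =o[atTop] (fun N : ℕ => (N : ℝ)) :=
  stmt_12_general M hMpos hsuper q hq hlac K C hC ε
end

section
/- Let (M_n) be positive integers with M_{n+1} ≥ q·M_n for q > 1, and suppose |j·M_n/M_{n'} − j'| < 1/2 for integers j, j' and indices n > n'. If |j − α| ≥ z for some real α and z ≥ 1 (where α accounts for a fixed shift), then |j'| ≥ min(z·q^{n−n'} − 1/2, 1). -/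
open Real

lemma aux_pow (q : ℝ) (hq : 1 < q) (M : ℕ → ℕ) (hlac : ∀ n, q * M n ≤ M (n + 1)) :
    ∀ m k, q ^ k * M m ≤ M (m + k) := by
  intro m k
  induction k with
  | zero => simp
  | succ k ih =>
    have hq0 : 0 < q := lt_trans one_pos hq
    calc q ^ (k + 1) * M m = q * (q ^ k * M m) := by ring
    _ ≤ q * M (m + k) := by nlinarith
    _ ≤ M (m + k + 1) := hlac _

/-- For a Hadamard lacunary sequence, near-solutions of the shifted two-term Diophantine
inequality `|(j − α)·M_n/M_{n'} + j'| < 1/2` with `|j − α| ≥ z`, `z ≥ 1`, force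
`|j'| ≥ min(z·q^{n−n'} − 1/2, 1)`. -/
theorem stmt_13 (q : ℝ) (hq : 1 < q) (M : ℕ → ℕ) (hMpos : ∀ n, 0 < M n)
    (hlac : ∀ n, q * M n ≤ M (n + 1)) (j j' : ℤ) (n n' : ℕ) (hnn' : n' < n)
    (α z : ℝ) (hz : 1 ≤ z)
    (hdioph : |((j : ℝ) - α) * (M n : ℝ) / (M n' : ℝ) + (j' : ℝ)| < 1 / 2)
    (hjα : z ≤ |(j : ℝ) - α|) :
    min (z * q ^ (n - n') - 1 / 2) 1 ≤ |(j' : ℝ)| := by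
  have hM' : (0 : ℝ) < M n' := by exact_mod_cast hMpos n'
  have hMn : (0 : ℝ) < M n := by exact_mod_cast hMpos n
  have hpow := aux_pow q hq M hlac n' (n - n')
  rw [Nat.add_sub_cancel' hnn'.le] at hpow
  have hqpow : (0 : ℝ) < q ^ (n - n') := pow_pos (lt_trans one_pos hq) _
  have hratio : q ^ (n - n') ≤ (M n : ℝ) / (M n') := by
    rw [le_div_iff₀ hM']; nlinarith
  have hA : z * q ^ (n - n') ≤ |((j : ℝ) - α) * (M n : ℝ) / (M n' : ℝ)| := by
    rw [abs_div, abs_mul, abs_of_pos hMn, abs_of_pos hM']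
    rw [div_eq_mul_one_div, mul_assoc, ← div_eq_mul_one_div]
    have hz0 : 0 < z := lt_of_lt_of_le one_pos hz
    calc z * q ^ (n - n') ≤ z * ((M n : ℝ) / M n') := by
          exact mul_le_mul_of_nonneg_left hratio hz0.le
    _ ≤ |(j : ℝ) - α| * ((M n : ℝ) / M n') := by
          apply mul_le_mul_of_nonneg_right hjα (by positivity)
  have : z * q ^ (n - n') - 1 / 2 ≤ |(j' : ℝ)| := by
    have h2 : |((j : ℝ) - α) * (M n : ℝ) / (M n' : ℝ)| - |((j : ℝ) - α) * (M n : ℝ) / (M n' : ℝ) + (j' : ℝ)| ≤ |(j' : ℝ)| := by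
      have := abs_sub_abs_le_abs_sub (((j : ℝ) - α) * (M n : ℝ) / (M n' : ℝ)) (((j : ℝ) - α) * (M n : ℝ) / (M n' : ℝ) + (j' : ℝ))
      simp only [sub_add_cancel_left, abs_neg] at this
      linarith
    linarith
  exact le_trans (min_le_left _ _) this
end

section
/- Let (M_n) be positive integers with M_{n+1} ≥ q·M_n for q > 1. Fix δ₁, δ₂ ∈ {0,1} and a real number R. Then Σ over pairs 0 ≤ l' ≤ l ≤ 2N and nonzero integers |j|, |j'| ≤ N^K with |(−1)^{δ₁} j M_l + (−1)^{δ₂} j' M_{l'} − R| < (1/2) M_{l'} of |j|^{-1}|j'|^{-1} is O(N), with implied constant depending only on q and K. -/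
open Real Finset



/-- A sum of reals, at most one of which is nonzero, is bounded by any `b ≥ 0` that
bounds each nonzero term. -/
private lemma sum_le_of_unique {ι : Type*} (s : Finset ι) (f : ι → ℝ) (b : ℝ) (hb : 0 ≤ b)
    (hle : ∀ i ∈ s, f i ≠ 0 → f i ≤ b)
    (hun : ∀ i ∈ s, ∀ k ∈ s, f i ≠ 0 → f k ≠ 0 → i = k) :
    ∑ i ∈ s, f i ≤ b := by
  classical
  rw [← Finset.sum_filter_ne_zero]
  rcases Finset.eq_empty_or_nonempty (s.filter fun i => f i ≠ 0) with h | ⟨i, hi⟩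
  · rw [h, Finset.sum_empty]; exact hb
  · have hi' := Finset.mem_filter.mp hi
    have hs : s.filter (fun i => f i ≠ 0) = {i} :=
      Finset.eq_singleton_iff_unique_mem.mpr ⟨hi, fun k hk => by
        have hk' := Finset.mem_filter.mp hk
        exact hun k hk'.1 i hi'.1 hk'.2 hi'.2⟩
    rw [hs, Finset.sum_singleton]
    exact hle i hi'.1 hi'.2

private lemma lac_pow {q : ℝ} (hq : 1 < q) {M : ℕ → ℕ}
    (hM : ∀ n, q * M n ≤ M (n + 1)) (a d : ℕ) :
    q ^ d * (M a : ℝ) ≤ (M (a + d) : ℝ) := by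
  induction d with
  | zero => simp
  | succ d ih =>
      have h1 : q ^ (d + 1) * (M a : ℝ) = q * (q ^ d * (M a : ℝ)) := by ring
      rw [h1]
      calc q * (q ^ d * (M a : ℝ)) ≤ q * (M (a + d) : ℝ) :=
            mul_le_mul_of_nonneg_left ih (by linarith)
        _ ≤ (M (a + d + 1) : ℝ) := hM (a + d)

private lemma lac_mono {q : ℝ} (hq : 1 < q) {M : ℕ → ℕ}
    (hM0 : ∀ n, 0 < M n) (hM : ∀ n, q * M n ≤ M (n + 1)) {a b : ℕ} (hab : a ≤ b) :
    (M a : ℝ) ≤ (M b : ℝ) := by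
  have h := lac_pow hq hM a (b - a)
  rw [Nat.add_sub_cancel' hab] at h
  have h1 : (1 : ℝ) ≤ q ^ (b - a) := one_le_pow₀ (by linarith)
  have h0 : (0 : ℝ) ≤ (M a : ℝ) := by positivity
  nlinarith [mul_nonneg (sub_nonneg.mpr h1) h0]

/-- Geometric-sum bound for a lacunary sequence. -/
private lemma lac_sum_le {q : ℝ} (hq : 1 < q) {M : ℕ → ℕ}
    (hM : ∀ n, q * M n ≤ M (n + 1)) (s : Finset ℕ) (y : ℝ) (hy : 0 ≤ y)
    (h : ∀ l ∈ s, (M l : ℝ) ≤ y) :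
    ∑ l ∈ s, (M l : ℝ) ≤ q / (q - 1) * y := by
  have hq0 : (0 : ℝ) < q := by linarith
  have hq1 : (0 : ℝ) < q - 1 := by linarith
  have hcst : (0 : ℝ) ≤ q / (q - 1) * y := by positivity
  rcases Finset.eq_empty_or_nonempty s with rfl | hs
  · simpa using hcst
  · set b := s.max' hs with hb
    have hinv1 : q⁻¹ < 1 := inv_lt_one_of_one_lt₀ hq
    have hinv0 : (0 : ℝ) ≤ q⁻¹ := by positivity
    have hterm : ∀ l ∈ s, (M l : ℝ) ≤ y * q⁻¹ ^ (b - l) := by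
      intro l hl
      have hlb : l ≤ b := Finset.le_max' s l hl
      have h1 := lac_pow hq hM l (b - l)
      rw [Nat.add_sub_cancel' hlb] at h1
      have h2 : (M b : ℝ) ≤ y := h b (s.max'_mem hs)
      have hqp : (0 : ℝ) < q ^ (b - l) := by positivity
      have h3 : (M l : ℝ) ≤ y / q ^ (b - l) := by
        rw [le_div_iff₀ hqp]; nlinarith
      calc (M l : ℝ) ≤ y / q ^ (b - l) := h3
        _ = y * q⁻¹ ^ (b - l) := by rw [inv_pow]; ring
    calc ∑ l ∈ s, (M l : ℝ) ≤ ∑ l ∈ s, y * q⁻¹ ^ (b - l) := Finset.sum_le_sum hterm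
      _ ≤ ∑ l ∈ Finset.range (b + 1), y * q⁻¹ ^ (b - l) := by
          apply Finset.sum_le_sum_of_subset_of_nonneg
          · intro l hl
            exact Finset.mem_range.mpr (Nat.lt_succ_of_le (Finset.le_max' s l hl))
          · intro i _ _; positivity
      _ = ∑ i ∈ Finset.range (b + 1), y * q⁻¹ ^ i :=
          Finset.sum_range_reflect (fun i => y * q⁻¹ ^ i) (b + 1)
      _ = y * ∑ i ∈ Finset.range (b + 1), q⁻¹ ^ i := by rw [Finset.mul_sum]
      _ ≤ y * (1 - q⁻¹)⁻¹ := by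
          apply mul_le_mul_of_nonneg_left _ hy
          have hr : (0:ℝ) < 1 - q⁻¹ := by linarith
          have hgm := geom_sum_mul q⁻¹ (b + 1)
          have hpn : (0:ℝ) ≤ q⁻¹ ^ (b + 1) := by positivity
          rw [show (1 - q⁻¹)⁻¹ = 1 / (1 - q⁻¹) from (one_div _).symm, le_div_iff₀ hr]
          nlinarith
      _ = q / (q - 1) * y := by
          have hne : q ≠ 0 := ne_of_gt hq0
          have : (1 : ℝ) - q⁻¹ = (q - 1) / q := by field_simp
          rw [this, inv_div]; ring

private lemma basel_aux (m : ℕ) (hm : 1 ≤ m) :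
    ∑ j ∈ (Finset.Icc (-(m : ℤ)) (m : ℤ)).erase 0, (((j : ℝ)) ^ 2)⁻¹ ≤ 4 - 2 / m := by
  induction m with
  | zero => omega
  | succ m ih =>
      by_cases hm0 : m = 0
      · subst hm0
        have hset : (Finset.Icc (-(1 : ℤ)) (1 : ℤ)).erase 0 = {-1, 1} := by decide
        rw [show ((0 + 1 : ℕ) : ℤ) = (1 : ℤ) by norm_num] at *
        rw [hset]
        norm_num
      · have h1m : 1 ≤ m := by omega
        have hset : (Finset.Icc (-((m + 1 : ℕ) : ℤ)) ((m + 1 : ℕ) : ℤ)).erase 0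
            = insert ((m + 1 : ℕ) : ℤ) (insert (-((m + 1 : ℕ) : ℤ))
              ((Finset.Icc (-(m : ℤ)) (m : ℤ)).erase 0)) := by
          ext x
          simp only [Finset.mem_erase, Finset.mem_Icc, Finset.mem_insert]
          push_cast
          omega
        have hn1 : -((m + 1 : ℕ) : ℤ) ∉ (Finset.Icc (-(m : ℤ)) (m : ℤ)).erase 0 := by
          simp only [Finset.mem_erase, Finset.mem_Icc]
          push_cast
          omega
        have hn2 : ((m + 1 : ℕ) : ℤ) ∉ insert (-((m + 1 : ℕ) : ℤ))
            ((Finset.Icc (-(m : ℤ)) (m : ℤ)).erase 0) := by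
          simp only [Finset.mem_insert, Finset.mem_erase, Finset.mem_Icc]
          push_cast
          omega
        rw [hset, Finset.sum_insert hn2, Finset.sum_insert hn1]
        have hS := ih h1m
        have hm1 : (1 : ℝ) ≤ (m : ℝ) := by exact_mod_cast h1m
        have hmp : (0 : ℝ) < (m : ℝ) := by linarith
        have hmp1 : (0 : ℝ) < (m : ℝ) + 1 := by linarith
        push_cast
        rw [neg_sq]
        have hkey : 2 * (((m : ℝ) + 1) ^ 2)⁻¹ ≤ 2 / m - 2 / ((m : ℝ) + 1) := by
          rw [div_sub_div _ _ (ne_of_gt hmp) (ne_of_gt hmp1),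
            le_div_iff₀ (by positivity)]
          have h3 : (((m : ℝ) + 1) ^ 2)⁻¹ * ((m : ℝ) + 1) ^ 2 = 1 := by
            field_simp
          have h4 : (0:ℝ) ≤ (((m : ℝ) + 1) ^ 2)⁻¹ := by positivity
          nlinarith [h3, h4, mul_nonneg h4 hmp.le]
        have : (((m : ℝ) + 1) ^ 2)⁻¹ + ((((m : ℝ) + 1) ^ 2)⁻¹ +
            (∑ j ∈ (Finset.Icc (-(m : ℤ)) (m : ℤ)).erase 0, (((j : ℝ)) ^ 2)⁻¹))
            ≤ 2 * (((m : ℝ) + 1) ^ 2)⁻¹ + (4 - 2 / m) := by linarith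
        linarith

private lemma basel_E (E : Finset ℤ) (hE : (0 : ℤ) ∉ E) :
    ∑ j ∈ E, (((j : ℝ)) ^ 2)⁻¹ ≤ 4 := by
  classical
  set m := E.sup (fun j => j.natAbs) with hm
  have hsub : E ⊆ (Finset.Icc (-(m : ℤ)) (m : ℤ)).erase 0 := by
    intro j hj
    have h1 : j.natAbs ≤ m := Finset.le_sup hj
    have h0 : j ≠ 0 := fun h => hE (h ▸ hj)
    simp only [Finset.mem_erase, Finset.mem_Icc]
    omega
  calc ∑ j ∈ E, (((j : ℝ)) ^ 2)⁻¹
      ≤ ∑ j ∈ (Finset.Icc (-(m : ℤ)) (m : ℤ)).erase 0, (((j : ℝ)) ^ 2)⁻¹ :=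
        Finset.sum_le_sum_of_subset_of_nonneg hsub (by intros; positivity)
    _ ≤ 4 := by
        rcases Nat.eq_zero_or_pos m with h0 | h1
        · rw [h0]
          norm_num
        · have := basel_aux m h1
          have : (0:ℝ) ≤ 2 / m := by positivity
          linarith [basel_aux m h1]

set_option maxHeartbeats 2000000 in
private lemma innerA (q : ℝ) (hq : 1 < q) (M : ℕ → ℕ) (hM0 : ∀ n, 0 < M n)
    (hM : ∀ n, q * M n ≤ M (n + 1)) (σ₁ σ₂ : ℝ) (h1 : |σ₁| = 1) (h2 : |σ₂| = 1)
    (R : ℝ) (E : Finset ℤ) (hE : (0 : ℤ) ∉ E) (n l' : ℕ) (j' : ℤ) (hj'E : j' ∈ E) :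
    ∑ l ∈ Finset.Ico l' n, ∑ j ∈ E,
      (if |σ₁ * (j : ℝ) * M l + σ₂ * (j' : ℝ) * M l' - R| < 1 / 2 * M l' ∧ |j'| ≤ |j|
       then |(j : ℝ)|⁻¹ * |(j' : ℝ)|⁻¹ else 0)
      ≤ 4 * q / (q - 1) * (((j' : ℝ)) ^ 2)⁻¹ := by
  classical
  have hq1 : (0 : ℝ) < q - 1 := by linarith
  obtain ⟨c, hc_def⟩ : ∃ x : ℝ, x = |R - σ₂ * (j' : ℝ) * M l'| := ⟨_, rfl⟩
  have hc0 : 0 ≤ c := hc_def ▸ abs_nonneg _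
  have hj'0 : j' ≠ 0 := fun h => hE (h ▸ hj'E)
  obtain ⟨J, hJ_def⟩ : ∃ x : ℝ, x = |(j' : ℝ)| := ⟨_, rfl⟩
  have hJ1 : (1 : ℝ) ≤ J := by
    rw [hJ_def, ← Int.cast_abs]
    exact_mod_cast Int.one_le_abs hj'0
  have hJ0 : (0 : ℝ) < J := by linarith
  have step1 : ∀ l ∈ Finset.Ico l' n,
      (∑ j ∈ E, (if |σ₁ * (j : ℝ) * M l + σ₂ * (j' : ℝ) * M l' - R| < 1 / 2 * M l' ∧ |j'| ≤ |j|
          then |(j : ℝ)|⁻¹ * |(j' : ℝ)|⁻¹ else 0))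
        ≤ (if (M l : ℝ) * J ≤ 2 * c then 2 * (M l : ℝ) / c * J⁻¹ else 0) := by
    intro l hl
    have hll' : l' ≤ l := (Finset.mem_Ico.mp hl).1
    have hml : (0 : ℝ) < M l := by exact_mod_cast hM0 l
    have hml' : (0 : ℝ) < M l' := by exact_mod_cast hM0 l'
    have hmono : (M l' : ℝ) ≤ M l := lac_mono hq hM0 hM hll'
    apply sum_le_of_unique
    · split
      · positivity
      · exact le_refl 0
    · intro j hjE hne
      have hj0 : j ≠ 0 := fun h => hE (h ▸ hjE)
      have hja : (1 : ℝ) ≤ |(j : ℝ)| := by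
        rw [← Int.cast_abs]; exact_mod_cast Int.one_le_abs hj0
      have hjap : (0 : ℝ) < |(j : ℝ)| := by linarith
      by_cases hcond : |σ₁ * (j : ℝ) * M l + σ₂ * (j' : ℝ) * M l' - R| < 1 / 2 * M l'
          ∧ |j'| ≤ |j|
      swap
      · exact absurd (if_neg hcond) hne
      obtain ⟨hlt, hjj⟩ := hcond
      rw [if_pos (⟨hlt, hjj⟩ :
        |σ₁ * (j : ℝ) * M l + σ₂ * (j' : ℝ) * M l' - R| < 1 / 2 * M l' ∧ |j'| ≤ |j|)]
      have hJj : J ≤ |(j : ℝ)| := by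
        rw [hJ_def, ← Int.cast_abs, ← Int.cast_abs]; exact_mod_cast hjj
      have habs1 : |σ₁ * (j : ℝ) * M l| = |(j : ℝ)| * M l := by
        rw [abs_mul, abs_mul, h1, one_mul, Nat.abs_cast]
      have hdist : |σ₁ * (j : ℝ) * M l - (R - σ₂ * (j' : ℝ) * M l')| < 1 / 2 * M l' := by
        have e : σ₁ * (j : ℝ) * M l - (R - σ₂ * (j' : ℝ) * M l')
            = σ₁ * (j : ℝ) * M l + σ₂ * (j' : ℝ) * M l' - R := by ring
        rw [e]; exact hlt
      have hup : |(j : ℝ)| * M l < c + 1 / 2 * M l' := by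
        have h3 := abs_sub_abs_le_abs_sub (σ₁ * (j : ℝ) * M l) (R - σ₂ * (j' : ℝ) * M l')
        rw [habs1] at h3
        rw [hc_def]
        linarith [hdist]
      have hlow : c - 1 / 2 * M l' ≤ |(j : ℝ)| * M l := by
        have h3 := abs_sub_abs_le_abs_sub (R - σ₂ * (j' : ℝ) * M l') (σ₁ * (j : ℝ) * M l)
        rw [habs1, abs_sub_comm (R - σ₂ * (j' : ℝ) * (M l' : ℝ)) (σ₁ * (j : ℝ) * (M l : ℝ))] at h3
        rw [hc_def]
        linarith [hdist]
      have hMlj : (M l' : ℝ) ≤ |(j : ℝ)| * M l := by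
        nlinarith [mul_nonneg (sub_nonneg.mpr hja) hml.le]
      have hclow : 1 / 2 * (M l' : ℝ) < c := by linarith
      have hup2 : |(j : ℝ)| * M l < 2 * c := by linarith
      have hcpos : (0 : ℝ) < c := by linarith
      have hkey : c ≤ 2 * (|(j : ℝ)| * M l) := by
        rcases le_or_gt c (2 * (M l : ℝ)) with h | h
        · nlinarith [mul_nonneg (sub_nonneg.mpr hja) hml.le]
        · linarith
      have hinv : |(j : ℝ)|⁻¹ ≤ 2 * (M l : ℝ) / c := by
        rw [show |(j : ℝ)|⁻¹ = 1 / |(j : ℝ)| from (one_div _).symm,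
          div_le_div_iff₀ hjap hcpos]
        nlinarith
      have hbranch : (M l : ℝ) * J ≤ 2 * c := by
        nlinarith [mul_le_mul_of_nonneg_left hJj hml.le]
      rw [if_pos hbranch, ← hJ_def]
      exact mul_le_mul_of_nonneg_right hinv (inv_nonneg.mpr hJ0.le)
    · intro j₁ hj₁ j₂ hj₂ hne₁ hne₂
      have hc₁ : |σ₁ * (j₁ : ℝ) * M l + σ₂ * (j' : ℝ) * M l' - R| < 1 / 2 * M l'
          ∧ |j'| ≤ |j₁| := by
        by_contra h; exact hne₁ (if_neg h)
      have hc₂ : |σ₁ * (j₂ : ℝ) * M l + σ₂ * (j' : ℝ) * M l' - R| < 1 / 2 * M l'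
          ∧ |j'| ≤ |j₂| := by
        by_contra h; exact hne₂ (if_neg h)
      have habs : |((j₁ - j₂ : ℤ) : ℝ)| * M l < (M l' : ℝ) := by
        have e : σ₁ * ((j₁ : ℝ) - (j₂ : ℝ)) * M l
            = (σ₁ * (j₁ : ℝ) * M l + σ₂ * (j' : ℝ) * M l' - R)
              - (σ₁ * (j₂ : ℝ) * M l + σ₂ * (j' : ℝ) * M l' - R) := by ring
        have h3 : |σ₁ * ((j₁ : ℝ) - (j₂ : ℝ)) * M l|
            ≤ |σ₁ * (j₁ : ℝ) * M l + σ₂ * (j' : ℝ) * M l' - R|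
              + |σ₁ * (j₂ : ℝ) * M l + σ₂ * (j' : ℝ) * M l' - R| := by
          rw [e]
          exact abs_sub (σ₁ * (j₁ : ℝ) * M l + σ₂ * (j' : ℝ) * M l' - R)
            (σ₁ * (j₂ : ℝ) * M l + σ₂ * (j' : ℝ) * M l' - R)
        have h4 : |σ₁ * ((j₁ : ℝ) - (j₂ : ℝ)) * M l| = |((j₁ - j₂ : ℤ) : ℝ)| * M l := by
          push_cast
          rw [abs_mul, abs_mul, h1, one_mul, Nat.abs_cast]
        rw [h4] at h3
        linarith [hc₁.1, hc₂.1]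
      have hml : (0 : ℝ) < M l := by exact_mod_cast hM0 l
      have hlt1 : |((j₁ - j₂ : ℤ) : ℝ)| < 1 := by nlinarith [abs_nonneg ((j₁ - j₂ : ℤ) : ℝ)]
      have h5 : |j₁ - j₂| < 1 := by
        rw [← Int.cast_abs] at hlt1
        exact_mod_cast hlt1
      have h6 : j₁ - j₂ = 0 := Int.abs_lt_one_iff.mp h5
      omega
  calc ∑ l ∈ Finset.Ico l' n, ∑ j ∈ E,
        (if |σ₁ * (j : ℝ) * M l + σ₂ * (j' : ℝ) * M l' - R| < 1 / 2 * M l' ∧ |j'| ≤ |j|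
         then |(j : ℝ)|⁻¹ * |(j' : ℝ)|⁻¹ else 0)
      ≤ ∑ l ∈ Finset.Ico l' n,
          (if (M l : ℝ) * J ≤ 2 * c then 2 * (M l : ℝ) / c * J⁻¹ else 0) :=
        Finset.sum_le_sum step1
    _ ≤ 4 * q / (q - 1) * (((j' : ℝ)) ^ 2)⁻¹ := by
        rcases eq_or_lt_of_le hc0 with hceq | hcpos
        · have hz : ∀ l ∈ Finset.Ico l' n,
              (if (M l : ℝ) * J ≤ 2 * c then 2 * (M l : ℝ) / c * J⁻¹ else 0) = 0 := by
            intro l _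
            have hml : (0 : ℝ) < M l := by exact_mod_cast hM0 l
            have hne : ¬ ((M l : ℝ) * J ≤ 2 * c) := by
              push_neg
              nlinarith [mul_pos hml hJ0]
            rw [if_neg hne]
          rw [Finset.sum_eq_zero hz]
          positivity
        · rw [← Finset.sum_filter]
          have hsub : ∀ l ∈ (Finset.Ico l' n).filter (fun l => (M l : ℝ) * J ≤ 2 * c),
              (M l : ℝ) ≤ 2 * c / J := by
            intro l hl
            have h3 := (Finset.mem_filter.mp hl).2
            rw [le_div_iff₀ hJ0]
            linarith
          have e1 : ∑ l ∈ (Finset.Ico l' n).filter (fun l => (M l : ℝ) * J ≤ 2 * c),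
              2 * (M l : ℝ) / c * J⁻¹
              = (2 / c * J⁻¹) * ∑ l ∈ (Finset.Ico l' n).filter
                  (fun l => (M l : ℝ) * J ≤ 2 * c), (M l : ℝ) := by
            rw [Finset.mul_sum]
            apply Finset.sum_congr rfl
            intro l _
            ring
          rw [e1]
          have hg := lac_sum_le hq hM ((Finset.Ico l' n).filter (fun l => (M l : ℝ) * J ≤ 2 * c))
            (2 * c / J) (by positivity) hsub
          calc (2 / c * J⁻¹) * ∑ l ∈ (Finset.Ico l' n).filter
                  (fun l => (M l : ℝ) * J ≤ 2 * c), (M l : ℝ)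
              ≤ (2 / c * J⁻¹) * (q / (q - 1) * (2 * c / J)) := by
                apply mul_le_mul_of_nonneg_left hg (by positivity)
            _ = 4 * q / (q - 1) * (((j' : ℝ)) ^ 2)⁻¹ := by
                rw [← sq_abs ((j' : ℝ)), ← hJ_def]
                have hcne : c ≠ 0 := ne_of_gt hcpos
                have hJne : J ≠ 0 := ne_of_gt hJ0
                have hqne : q - 1 ≠ 0 := ne_of_gt hq1
                field_simp
                ring

set_option maxHeartbeats 2000000 in
private lemma innerB (q : ℝ) (hq : 1 < q) (M : ℕ → ℕ) (hM0 : ∀ n, 0 < M n)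
    (hM : ∀ n, q * M n ≤ M (n + 1)) (σ₁ σ₂ : ℝ) (h1 : |σ₁| = 1) (h2 : |σ₂| = 1)
    (R : ℝ) (E : Finset ℤ) (hE : (0 : ℤ) ∉ E) (l : ℕ) (j : ℤ) (hjE : j ∈ E) :
    ∑ l' ∈ Finset.range (l + 1), ∑ j' ∈ E,
      (if |σ₁ * (j : ℝ) * M l + σ₂ * (j' : ℝ) * M l' - R| < 1 / 2 * M l' ∧ |j| < |j'|
       then |(j : ℝ)|⁻¹ * |(j' : ℝ)|⁻¹ else 0)
      ≤ 4 * q / (q - 1) * (((j : ℝ)) ^ 2)⁻¹ := by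
  classical
  have hq1 : (0 : ℝ) < q - 1 := by linarith
  obtain ⟨c, hc_def⟩ : ∃ x : ℝ, x = |R - σ₁ * (j : ℝ) * M l| := ⟨_, rfl⟩
  have hc0 : 0 ≤ c := hc_def ▸ abs_nonneg _
  have hj0 : j ≠ 0 := fun h => hE (h ▸ hjE)
  obtain ⟨J, hJ_def⟩ : ∃ x : ℝ, x = |(j : ℝ)| := ⟨_, rfl⟩
  have hJ1 : (1 : ℝ) ≤ J := by
    rw [hJ_def, ← Int.cast_abs]
    exact_mod_cast Int.one_le_abs hj0
  have hJ0 : (0 : ℝ) < J := by linarith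
  have step1 : ∀ l' ∈ Finset.range (l + 1),
      (∑ j' ∈ E, (if |σ₁ * (j : ℝ) * M l + σ₂ * (j' : ℝ) * M l' - R| < 1 / 2 * M l' ∧ |j| < |j'|
          then |(j : ℝ)|⁻¹ * |(j' : ℝ)|⁻¹ else 0))
        ≤ (if (M l' : ℝ) * J ≤ 2 * c then J⁻¹ * (2 * (M l' : ℝ) / c) else 0) := by
    intro l' _
    have hml : (0 : ℝ) < M l := by exact_mod_cast hM0 l
    have hml' : (0 : ℝ) < M l' := by exact_mod_cast hM0 l'
    apply sum_le_of_unique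
    · split
      · positivity
      · exact le_refl 0
    · intro j' hj'E hne
      have hj'0 : j' ≠ 0 := fun h => hE (h ▸ hj'E)
      have hja : (1 : ℝ) ≤ |(j' : ℝ)| := by
        rw [← Int.cast_abs]; exact_mod_cast Int.one_le_abs hj'0
      have hjap : (0 : ℝ) < |(j' : ℝ)| := by linarith
      by_cases hcond : |σ₁ * (j : ℝ) * M l + σ₂ * (j' : ℝ) * M l' - R| < 1 / 2 * M l'
          ∧ |j| < |j'|
      swap
      · exact absurd (if_neg hcond) hne
      obtain ⟨hlt, hjj⟩ := hcond
      rw [if_pos (⟨hlt, hjj⟩ :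
        |σ₁ * (j : ℝ) * M l + σ₂ * (j' : ℝ) * M l' - R| < 1 / 2 * M l' ∧ |j| < |j'|)]
      have hJj : J ≤ |(j' : ℝ)| := by
        rw [hJ_def, ← Int.cast_abs, ← Int.cast_abs]
        exact_mod_cast le_of_lt hjj
      have habs1 : |σ₂ * (j' : ℝ) * M l'| = |(j' : ℝ)| * M l' := by
        rw [abs_mul, abs_mul, h2, one_mul, Nat.abs_cast]
      have hdist : |σ₂ * (j' : ℝ) * M l' - (R - σ₁ * (j : ℝ) * M l)| < 1 / 2 * M l' := by
        have e : σ₂ * (j' : ℝ) * M l' - (R - σ₁ * (j : ℝ) * M l)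
            = σ₁ * (j : ℝ) * M l + σ₂ * (j' : ℝ) * M l' - R := by ring
        rw [e]; exact hlt
      have hup : |(j' : ℝ)| * M l' < c + 1 / 2 * M l' := by
        have h3 := abs_sub_abs_le_abs_sub (σ₂ * (j' : ℝ) * M l') (R - σ₁ * (j : ℝ) * M l)
        rw [habs1] at h3
        rw [hc_def]
        linarith [hdist]
      have hlow : c - 1 / 2 * M l' ≤ |(j' : ℝ)| * M l' := by
        have h3 := abs_sub_abs_le_abs_sub (R - σ₁ * (j : ℝ) * M l) (σ₂ * (j' : ℝ) * M l')
        rw [habs1, abs_sub_comm (R - σ₁ * (j : ℝ) * (M l : ℝ)) (σ₂ * (j' : ℝ) * (M l' : ℝ))] at h3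
        rw [hc_def]
        linarith [hdist]
      have hMlj : (M l' : ℝ) ≤ |(j' : ℝ)| * M l' := by
        nlinarith [mul_nonneg (sub_nonneg.mpr hja) hml'.le]
      have hclow : 1 / 2 * (M l' : ℝ) < c := by linarith
      have hup2 : |(j' : ℝ)| * M l' < 2 * c := by linarith
      have hcpos : (0 : ℝ) < c := by linarith
      have hkey : c ≤ 2 * (|(j' : ℝ)| * M l') := by
        rcases le_or_gt c (2 * (M l' : ℝ)) with h | h
        · nlinarith [mul_nonneg (sub_nonneg.mpr hja) hml'.le]
        · linarith
      have hinv : |(j' : ℝ)|⁻¹ ≤ 2 * (M l' : ℝ) / c := by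
        rw [show |(j' : ℝ)|⁻¹ = 1 / |(j' : ℝ)| from (one_div _).symm,
          div_le_div_iff₀ hjap hcpos]
        nlinarith
      have hbranch : (M l' : ℝ) * J ≤ 2 * c := by
        nlinarith [mul_le_mul_of_nonneg_left hJj hml'.le]
      rw [if_pos hbranch, ← hJ_def]
      exact mul_le_mul_of_nonneg_left hinv (inv_nonneg.mpr hJ0.le)
    · intro j₁ hj₁ j₂ hj₂ hne₁ hne₂
      have hc₁ : |σ₁ * (j : ℝ) * M l + σ₂ * (j₁ : ℝ) * M l' - R| < 1 / 2 * M l'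
          ∧ |j| < |j₁| := by
        by_contra h; exact hne₁ (if_neg h)
      have hc₂ : |σ₁ * (j : ℝ) * M l + σ₂ * (j₂ : ℝ) * M l' - R| < 1 / 2 * M l'
          ∧ |j| < |j₂| := by
        by_contra h; exact hne₂ (if_neg h)
      have habs : |((j₁ - j₂ : ℤ) : ℝ)| * M l' < (M l' : ℝ) := by
        have e : σ₂ * ((j₁ : ℝ) - (j₂ : ℝ)) * M l'
            = (σ₁ * (j : ℝ) * M l + σ₂ * (j₁ : ℝ) * M l' - R)
              - (σ₁ * (j : ℝ) * M l + σ₂ * (j₂ : ℝ) * M l' - R) := by ring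
        have h3 : |σ₂ * ((j₁ : ℝ) - (j₂ : ℝ)) * M l'|
            ≤ |σ₁ * (j : ℝ) * M l + σ₂ * (j₁ : ℝ) * M l' - R|
              + |σ₁ * (j : ℝ) * M l + σ₂ * (j₂ : ℝ) * M l' - R| := by
          rw [e]
          exact abs_sub (σ₁ * (j : ℝ) * M l + σ₂ * (j₁ : ℝ) * M l' - R)
            (σ₁ * (j : ℝ) * M l + σ₂ * (j₂ : ℝ) * M l' - R)
        have h4 : |σ₂ * ((j₁ : ℝ) - (j₂ : ℝ)) * M l'| = |((j₁ - j₂ : ℤ) : ℝ)| * M l' := by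
          push_cast
          rw [abs_mul, abs_mul, h2, one_mul, Nat.abs_cast]
        rw [h4] at h3
        linarith [hc₁.1, hc₂.1]
      have hml' : (0 : ℝ) < M l' := by exact_mod_cast hM0 l'
      have hlt1 : |((j₁ - j₂ : ℤ) : ℝ)| < 1 := by nlinarith [abs_nonneg ((j₁ - j₂ : ℤ) : ℝ)]
      have h5 : |j₁ - j₂| < 1 := by
        rw [← Int.cast_abs] at hlt1
        exact_mod_cast hlt1
      have h6 : j₁ - j₂ = 0 := Int.abs_lt_one_iff.mp h5
      omega
  calc ∑ l' ∈ Finset.range (l + 1), ∑ j' ∈ E,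
        (if |σ₁ * (j : ℝ) * M l + σ₂ * (j' : ℝ) * M l' - R| < 1 / 2 * M l' ∧ |j| < |j'|
         then |(j : ℝ)|⁻¹ * |(j' : ℝ)|⁻¹ else 0)
      ≤ ∑ l' ∈ Finset.range (l + 1),
          (if (M l' : ℝ) * J ≤ 2 * c then J⁻¹ * (2 * (M l' : ℝ) / c) else 0) :=
        Finset.sum_le_sum step1
    _ ≤ 4 * q / (q - 1) * (((j : ℝ)) ^ 2)⁻¹ := by
        rcases eq_or_lt_of_le hc0 with hceq | hcpos
        · have hz : ∀ l' ∈ Finset.range (l + 1),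
              (if (M l' : ℝ) * J ≤ 2 * c then J⁻¹ * (2 * (M l' : ℝ) / c) else 0) = 0 := by
            intro l' _
            have hml' : (0 : ℝ) < M l' := by exact_mod_cast hM0 l'
            have hne : ¬ ((M l' : ℝ) * J ≤ 2 * c) := by
              push_neg
              nlinarith [mul_pos hml' hJ0]
            rw [if_neg hne]
          rw [Finset.sum_eq_zero hz]
          positivity
        · rw [← Finset.sum_filter]
          have hsub : ∀ l' ∈ (Finset.range (l + 1)).filter (fun l' => (M l' : ℝ) * J ≤ 2 * c),
              (M l' : ℝ) ≤ 2 * c / J := by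
            intro l' hl'
            have h3 := (Finset.mem_filter.mp hl').2
            rw [le_div_iff₀ hJ0]
            linarith
          have e1 : ∑ l' ∈ (Finset.range (l + 1)).filter (fun l' => (M l' : ℝ) * J ≤ 2 * c),
              J⁻¹ * (2 * (M l' : ℝ) / c)
              = (2 / c * J⁻¹) * ∑ l' ∈ (Finset.range (l + 1)).filter
                  (fun l' => (M l' : ℝ) * J ≤ 2 * c), (M l' : ℝ) := by
            rw [Finset.mul_sum]
            apply Finset.sum_congr rfl
            intro l' _
            ring
          rw [e1]
          have hg := lac_sum_le hq hM
            ((Finset.range (l + 1)).filter (fun l' => (M l' : ℝ) * J ≤ 2 * c))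
            (2 * c / J) (by positivity) hsub
          calc (2 / c * J⁻¹) * ∑ l' ∈ (Finset.range (l + 1)).filter
                  (fun l' => (M l' : ℝ) * J ≤ 2 * c), (M l' : ℝ)
              ≤ (2 / c * J⁻¹) * (q / (q - 1) * (2 * c / J)) := by
                apply mul_le_mul_of_nonneg_left hg (by positivity)
            _ = 4 * q / (q - 1) * (((j : ℝ)) ^ 2)⁻¹ := by
                rw [← sq_abs ((j : ℝ)), ← hJ_def]
                have hcne : c ≠ 0 := ne_of_gt hcpos
                have hJne : J ≠ 0 := ne_of_gt hJ0
                have hqne : q - 1 ≠ 0 := ne_of_gt hq1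
                field_simp
                ring

set_option maxHeartbeats 1000000 in
private lemma key_est (q : ℝ) (hq : 1 < q) (M : ℕ → ℕ) (hM0 : ∀ n, 0 < M n)
    (hM : ∀ n, q * M n ≤ M (n + 1)) (σ₁ σ₂ : ℝ) (h1 : |σ₁| = 1) (h2 : |σ₂| = 1)
    (R : ℝ) (E : Finset ℤ) (hE : (0 : ℤ) ∉ E) (n : ℕ) :
    ∑ l ∈ Finset.range n, ∑ l' ∈ Finset.range (l + 1), ∑ j ∈ E, ∑ j' ∈ E,
      (if |σ₁ * (j : ℝ) * M l + σ₂ * (j' : ℝ) * M l' - R| < 1 / 2 * M l'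
       then |(j : ℝ)|⁻¹ * |(j' : ℝ)|⁻¹ else 0)
      ≤ (n : ℝ) * (32 * q / (q - 1)) := by
  classical
  have hq1 : (0 : ℝ) < q - 1 := by linarith
  have hCA : (0 : ℝ) ≤ 4 * q / (q - 1) := by positivity
  have hsplit : ∀ (l l' : ℕ) (j j' : ℤ),
      (if |σ₁ * (j : ℝ) * M l + σ₂ * (j' : ℝ) * M l' - R| < 1 / 2 * M l'
       then |(j : ℝ)|⁻¹ * |(j' : ℝ)|⁻¹ else 0)
      = (if |σ₁ * (j : ℝ) * M l + σ₂ * (j' : ℝ) * M l' - R| < 1 / 2 * M l' ∧ |j'| ≤ |j|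
       then |(j : ℝ)|⁻¹ * |(j' : ℝ)|⁻¹ else 0)
      + (if |σ₁ * (j : ℝ) * M l + σ₂ * (j' : ℝ) * M l' - R| < 1 / 2 * M l' ∧ |j| < |j'|
       then |(j : ℝ)|⁻¹ * |(j' : ℝ)|⁻¹ else 0) := by
    intro l l' j j'
    by_cases hc : |σ₁ * (j : ℝ) * M l + σ₂ * (j' : ℝ) * M l' - R| < 1 / 2 * M l'
    · rcases le_or_gt |j'| |j| with hp | hp
      · rw [if_pos hc, if_pos ⟨hc, hp⟩, if_neg (fun h => absurd hp (not_le.mpr h.2))]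
        ring
      · rw [if_pos hc, if_neg (fun h : _ ∧ _ => absurd h.2 (not_le.mpr hp)), if_pos ⟨hc, hp⟩]
        ring
    · rw [if_neg hc, if_neg (fun h : _ ∧ _ => hc h.1), if_neg (fun h : _ ∧ _ => hc h.1)]
      ring
  have partA : ∑ l ∈ Finset.range n, ∑ l' ∈ Finset.range (l + 1), ∑ j ∈ E, ∑ j' ∈ E,
      (if |σ₁ * (j : ℝ) * M l + σ₂ * (j' : ℝ) * M l' - R| < 1 / 2 * M l' ∧ |j'| ≤ |j|
       then |(j : ℝ)|⁻¹ * |(j' : ℝ)|⁻¹ else 0)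
      ≤ (n : ℝ) * (16 * q / (q - 1)) := by
    calc ∑ l ∈ Finset.range n, ∑ l' ∈ Finset.range (l + 1), ∑ j ∈ E, ∑ j' ∈ E,
          (if |σ₁ * (j : ℝ) * M l + σ₂ * (j' : ℝ) * M l' - R| < 1 / 2 * M l' ∧ |j'| ≤ |j|
       then |(j : ℝ)|⁻¹ * |(j' : ℝ)|⁻¹ else 0)
        = ∑ l ∈ Finset.Ico 0 n, ∑ l' ∈ Finset.Ico 0 (l + 1), ∑ j' ∈ E, ∑ j ∈ E,
          (if |σ₁ * (j : ℝ) * M l + σ₂ * (j' : ℝ) * M l' - R| < 1 / 2 * M l' ∧ |j'| ≤ |j|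
       then |(j : ℝ)|⁻¹ * |(j' : ℝ)|⁻¹ else 0) := by
          simp only [Finset.range_eq_Ico]
          exact Finset.sum_congr rfl (fun l _ =>
            Finset.sum_congr rfl (fun l' _ => Finset.sum_comm))
      _ = ∑ l' ∈ Finset.Ico 0 n, ∑ l ∈ Finset.Ico l' n, ∑ j' ∈ E, ∑ j ∈ E,
          (if |σ₁ * (j : ℝ) * M l + σ₂ * (j' : ℝ) * M l' - R| < 1 / 2 * M l' ∧ |j'| ≤ |j|
       then |(j : ℝ)|⁻¹ * |(j' : ℝ)|⁻¹ else 0) := by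
          exact (Finset.sum_Ico_Ico_comm 0 n (fun l' l => ∑ j' ∈ E, ∑ j ∈ E,
            (if |σ₁ * (j : ℝ) * M l + σ₂ * (j' : ℝ) * M l' - R| < 1 / 2 * M l' ∧ |j'| ≤ |j|
       then |(j : ℝ)|⁻¹ * |(j' : ℝ)|⁻¹ else 0))).symm
      _ = ∑ l' ∈ Finset.Ico 0 n, ∑ j' ∈ E, ∑ l ∈ Finset.Ico l' n, ∑ j ∈ E,
          (if |σ₁ * (j : ℝ) * M l + σ₂ * (j' : ℝ) * M l' - R| < 1 / 2 * M l' ∧ |j'| ≤ |j|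
       then |(j : ℝ)|⁻¹ * |(j' : ℝ)|⁻¹ else 0) := by
          exact Finset.sum_congr rfl (fun l' _ => Finset.sum_comm)
      _ ≤ ∑ l' ∈ Finset.Ico 0 n, ∑ j' ∈ E, 4 * q / (q - 1) * (((j' : ℝ)) ^ 2)⁻¹ := by
          apply Finset.sum_le_sum
          intro l' _
          apply Finset.sum_le_sum
          intro j' hj'
          exact innerA q hq M hM0 hM σ₁ σ₂ h1 h2 R E hE n l' j' hj'
      _ ≤ ∑ l' ∈ Finset.Ico 0 n, (16 * q / (q - 1)) := by
          apply Finset.sum_le_sum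
          intro l' _
          rw [← Finset.mul_sum]
          calc 4 * q / (q - 1) * ∑ j' ∈ E, (((j' : ℝ)) ^ 2)⁻¹
              ≤ 4 * q / (q - 1) * 4 := mul_le_mul_of_nonneg_left (basel_E E hE) hCA
            _ = 16 * q / (q - 1) := by ring
      _ = (n : ℝ) * (16 * q / (q - 1)) := by
          rw [Finset.sum_const, Nat.card_Ico, nsmul_eq_mul]
          norm_num
  have partB : ∑ l ∈ Finset.range n, ∑ l' ∈ Finset.range (l + 1), ∑ j ∈ E, ∑ j' ∈ E,
      (if |σ₁ * (j : ℝ) * M l + σ₂ * (j' : ℝ) * M l' - R| < 1 / 2 * M l' ∧ |j| < |j'|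
       then |(j : ℝ)|⁻¹ * |(j' : ℝ)|⁻¹ else 0)
      ≤ (n : ℝ) * (16 * q / (q - 1)) := by
    calc ∑ l ∈ Finset.range n, ∑ l' ∈ Finset.range (l + 1), ∑ j ∈ E, ∑ j' ∈ E,
          (if |σ₁ * (j : ℝ) * M l + σ₂ * (j' : ℝ) * M l' - R| < 1 / 2 * M l' ∧ |j| < |j'|
       then |(j : ℝ)|⁻¹ * |(j' : ℝ)|⁻¹ else 0)
        = ∑ l ∈ Finset.range n, ∑ j ∈ E, ∑ l' ∈ Finset.range (l + 1), ∑ j' ∈ E,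
          (if |σ₁ * (j : ℝ) * M l + σ₂ * (j' : ℝ) * M l' - R| < 1 / 2 * M l' ∧ |j| < |j'|
       then |(j : ℝ)|⁻¹ * |(j' : ℝ)|⁻¹ else 0) := by
          exact Finset.sum_congr rfl (fun l _ => Finset.sum_comm)
      _ ≤ ∑ l ∈ Finset.range n, ∑ j ∈ E, 4 * q / (q - 1) * (((j : ℝ)) ^ 2)⁻¹ := by
          apply Finset.sum_le_sum
          intro l _
          apply Finset.sum_le_sum
          intro j hj
          exact innerB q hq M hM0 hM σ₁ σ₂ h1 h2 R E hE l j hj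
      _ ≤ ∑ l ∈ Finset.range n, (16 * q / (q - 1)) := by
          apply Finset.sum_le_sum
          intro l _
          rw [← Finset.mul_sum]
          calc 4 * q / (q - 1) * ∑ j ∈ E, (((j : ℝ)) ^ 2)⁻¹
              ≤ 4 * q / (q - 1) * 4 := mul_le_mul_of_nonneg_left (basel_E E hE) hCA
            _ = 16 * q / (q - 1) := by ring
      _ = (n : ℝ) * (16 * q / (q - 1)) := by
          rw [Finset.sum_const, Finset.card_range, nsmul_eq_mul]
  calc ∑ l ∈ Finset.range n, ∑ l' ∈ Finset.range (l + 1), ∑ j ∈ E, ∑ j' ∈ E,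
        (if |σ₁ * (j : ℝ) * M l + σ₂ * (j' : ℝ) * M l' - R| < 1 / 2 * M l'
       then |(j : ℝ)|⁻¹ * |(j' : ℝ)|⁻¹ else 0)
      = (∑ l ∈ Finset.range n, ∑ l' ∈ Finset.range (l + 1), ∑ j ∈ E, ∑ j' ∈ E,
          (if |σ₁ * (j : ℝ) * M l + σ₂ * (j' : ℝ) * M l' - R| < 1 / 2 * M l' ∧ |j'| ≤ |j|
       then |(j : ℝ)|⁻¹ * |(j' : ℝ)|⁻¹ else 0))
        + (∑ l ∈ Finset.range n, ∑ l' ∈ Finset.range (l + 1), ∑ j ∈ E, ∑ j' ∈ E,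
          (if |σ₁ * (j : ℝ) * M l + σ₂ * (j' : ℝ) * M l' - R| < 1 / 2 * M l' ∧ |j| < |j'|
       then |(j : ℝ)|⁻¹ * |(j' : ℝ)|⁻¹ else 0)) := by
        rw [← Finset.sum_add_distrib]
        apply Finset.sum_congr rfl; intro l _
        rw [← Finset.sum_add_distrib]
        apply Finset.sum_congr rfl; intro l' _
        rw [← Finset.sum_add_distrib]
        apply Finset.sum_congr rfl; intro j _
        rw [← Finset.sum_add_distrib]
        apply Finset.sum_congr rfl; intro j' _
        exact hsplit l l' j j'
    _ ≤ (n : ℝ) * (16 * q / (q - 1)) + (n : ℝ) * (16 * q / (q - 1)) := add_le_add partA partB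
    _ = (n : ℝ) * (32 * q / (q - 1)) := by ring


/-- Key counting estimate (equation (233)): for a Hadamard lacunary sequence, the weighted
count of near-solutions of shifted two-term Diophantine inequalities is `O(N)`, with
implied constant depending only on `q` and `K`. -/
theorem stmt_14 (q : ℝ) (hq : 1 < q) (K : ℕ) (hK : 1 ≤ K) :
    ∃ C > (0 : ℝ), ∀ (M : ℕ → ℕ), (∀ n, 0 < M n) → (∀ n, q * M n ≤ M (n + 1)) →
      ∀ (δ₁ δ₂ : ℕ), δ₁ ≤ 1 → δ₂ ≤ 1 → ∀ (R : ℝ) (N : ℕ), 1 ≤ N →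
        ∑ l ∈ Finset.range (2 * N + 1), ∑ l' ∈ Finset.range (l + 1),
          ∑ j ∈ (Finset.Icc (-(N ^ K : ℤ)) (N ^ K : ℤ)).erase 0,
            ∑ j' ∈ (Finset.Icc (-(N ^ K : ℤ)) (N ^ K : ℤ)).erase 0,
              (if |(-1 : ℝ) ^ δ₁ * (j : ℝ) * M l + (-1 : ℝ) ^ δ₂ * (j' : ℝ) * M l' - R| <
                  (1 / 2) * M l'
               then |(j : ℝ)|⁻¹ * |(j' : ℝ)|⁻¹ else 0) ≤ C * N := by
  have hq1 : (0 : ℝ) < q - 1 := by linarith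
  refine ⟨96 * q / (q - 1), div_pos (by linarith) hq1, ?_⟩
  intro M hM0 hM δ₁ δ₂ _ _ R N hN
  have h1 : |(-1 : ℝ) ^ δ₁| = 1 := by rw [abs_pow, abs_neg, abs_one, one_pow]
  have h2 : |(-1 : ℝ) ^ δ₂| = 1 := by rw [abs_pow, abs_neg, abs_one, one_pow]
  have hE : (0 : ℤ) ∉ (Finset.Icc (-(N ^ K : ℤ)) (N ^ K : ℤ)).erase 0 :=
    Finset.notMem_erase _ _
  have hkey := key_est q hq M hM0 hM ((-1 : ℝ) ^ δ₁) ((-1 : ℝ) ^ δ₂) h1 h2 R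
    ((Finset.Icc (-(N ^ K : ℤ)) (N ^ K : ℤ)).erase 0) hE (2 * N + 1)
  have hc32 : (0 : ℝ) ≤ 32 * q / (q - 1) := by positivity
  have hN' : (1 : ℝ) ≤ (N : ℝ) := by exact_mod_cast hN
  calc ∑ l ∈ Finset.range (2 * N + 1), ∑ l' ∈ Finset.range (l + 1),
          ∑ j ∈ (Finset.Icc (-(N ^ K : ℤ)) (N ^ K : ℤ)).erase 0,
            ∑ j' ∈ (Finset.Icc (-(N ^ K : ℤ)) (N ^ K : ℤ)).erase 0,
              (if |(-1 : ℝ) ^ δ₁ * (j : ℝ) * M l + (-1 : ℝ) ^ δ₂ * (j' : ℝ) * M l' - R| <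
                  (1 / 2) * M l'
               then |(j : ℝ)|⁻¹ * |(j' : ℝ)|⁻¹ else 0)
      ≤ ((2 * N + 1 : ℕ) : ℝ) * (32 * q / (q - 1)) := hkey
    _ ≤ 96 * q / (q - 1) * N := by
        rw [show (96 : ℝ) * q / (q - 1) = 3 * (32 * q / (q - 1)) by ring]
        push_cast
        nlinarith [mul_nonneg hc32 (sub_nonneg.mpr hN')]
end

section
/- Let (M_n) be positive integers with M_{n+1} ≥ q·M_n for q > 1, let K, N, G be positive integers, and suppose integers l_H > l_{H+1} and |j_k| ≤ N^K (for k = 1,…,K) and signs δ_k ∈ {0,1} satisfy |Σ_{k=H+1}^{K} (−1)^{δ_k} j_k M_{l_k}| ≥ (1/2) M_{l_H} with l_{H+1} ≥ l_{H+2} ≥ … ≥ l_K. Then l_H − l_{H+1} ≤ log_q(2K) + K·log_q(N). -/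
/-!
Lacunarity gives `q ^ (l_H - l_{H+1}) * M_{l_{H+1}} ≤ M_{l_H}`. Since `l_k ≤ l_{H+1}` along the
tail, each of its at most `K` terms is bounded by `N ^ K * M_{l_{H+1}}`, so
`q ^ (l_H - l_{H+1}) ≤ 2 * K * N ^ K`; taking `log_q` gives the estimate.
-/

theorem pow_sub_mul_le_of_mul_le_succ {q : ℝ} (hq : 0 ≤ q) {M : ℕ → ℝ}
    (hM : ∀ n, q * M n ≤ M (n + 1)) {a b : ℕ} (hab : a ≤ b) :
    q ^ (b - a) * M a ≤ M b := by
  induction b, hab using Nat.le_induction with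
  | base => simp
  | succ b hab ih =>
    calc q ^ (b + 1 - a) * M a = q * (q ^ (b - a) * M a) := by
          rw [Nat.sub_add_comm hab, pow_succ]; ring
      _ ≤ q * M b := by gcongr
      _ ≤ M (b + 1) := hM b

theorem le_left_of_forall_succ_le {α : Type*} [Preorder α] {f : ℕ → α} {a b : ℕ}
    (hf : ∀ k, a ≤ k → k < b → f (k + 1) ≤ f k) {k : ℕ} (hk : k ∈ Finset.Icc a b) :
    f k ≤ f a := by
  obtain ⟨hak, hkb⟩ := Finset.mem_Icc.mp hk
  clear hk
  induction k, hak using Nat.le_induction with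
  | base => exact le_rfl
  | succ k hak ih => exact (hf k hak hkb).trans (ih (by omega))

theorem abs_sum_neg_one_pow_mul_le {ι : Type*} (s : Finset ι) (δ : ι → ℕ) (j m : ι → ℝ)
    {B C : ℝ} (hj : ∀ k ∈ s, |j k| ≤ B) (hm : ∀ k ∈ s, 0 ≤ m k ∧ m k ≤ C) :
    |∑ k ∈ s, (-1 : ℝ) ^ δ k * j k * m k| ≤ s.card * (B * C) := by
  refine (Finset.abs_sum_le_sum_abs _ _).trans ?_
  rw [← nsmul_eq_mul]
  refine Finset.sum_le_card_nsmul _ _ _ fun k hk => ?_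
  obtain ⟨hm0, hmC⟩ := hm k hk
  rw [abs_mul, abs_mul, abs_pow, abs_neg, abs_one, one_pow, one_mul, abs_of_nonneg hm0]
  exact mul_le_mul (hj k hk) hmC hm0 ((abs_nonneg _).trans (hj k hk))

theorem stmt_19_general (q : ℝ) (hq : 1 < q) (M : ℕ → ℕ) (hMpos : ∀ n, 0 < M n)
    (hlac : ∀ n, q * M n ≤ M (n + 1)) (K N : ℕ) (hN : 1 ≤ N)
    (l : ℕ → ℕ) (j : ℕ → ℤ) (δ : ℕ → ℕ) (H : ℕ) (hH : H + 1 ≤ K)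
    (hgap : l (H + 1) < l H)
    (hmono : ∀ k, H + 1 ≤ k → k < K → l (k + 1) ≤ l k)
    (hj : ∀ k, 1 ≤ k → k ≤ K → |j k| ≤ (N : ℤ) ^ K)
    (htail : (1 / 2 : ℝ) * M (l H) ≤
      |∑ k ∈ Finset.Icc (H + 1) K, (-1 : ℝ) ^ δ k * (j k : ℝ) * M (l k)|) :
    (l H : ℝ) - l (H + 1) ≤ Real.logb q (2 * K) + K * Real.logb q N := by
  have hM : Monotone fun n => (M n : ℝ) := monotone_nat_of_le_succ fun n =>
    (le_mul_of_one_le_left (Nat.cast_nonneg _) hq.le).trans (hlac n)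
  have hsum : |∑ k ∈ Finset.Icc (H + 1) K, (-1 : ℝ) ^ δ k * (j k : ℝ) * M (l k)|
      ≤ K * ((N : ℝ) ^ K * M (l (H + 1))) := by
    refine (abs_sum_neg_one_pow_mul_le (B := (N : ℝ) ^ K) _ δ _ _ (fun k hk => ?_) fun k hk =>
      ⟨Nat.cast_nonneg _, hM (le_left_of_forall_succ_le hmono hk)⟩).trans ?_
    · obtain ⟨hHk, hkK⟩ := Finset.mem_Icc.mp hk
      exact_mod_cast hj k (by omega) hkK
    · gcongr
      exact_mod_cast (Nat.card_Icc _ _).trans_le (by omega)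
  have hpow : q ^ (l H - l (H + 1)) ≤ 2 * K * (N : ℝ) ^ K := by
    have hgrowth := pow_sub_mul_le_of_mul_le_succ (zero_le_one.trans hq.le) hlac hgap.le
    have hpos : (0 : ℝ) < M (l (H + 1)) := by exact_mod_cast hMpos _
    refine le_of_mul_le_mul_right ?_ hpos
    linarith
  have hKpos : (0 : ℝ) < K := by exact_mod_cast (Nat.succ_pos H).trans_le hH
  have hNpos : (0 : ℝ) < N := by exact_mod_cast hN
  rw [← Nat.cast_sub hgap.le, ← Real.logb_pow, ← Real.logb_mul (by positivity) (by positivity),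
    Real.le_logb_iff_rpow_le hq (by positivity), Real.rpow_natCast]
  exact hpow

/-- Gap-propagation estimate (equation (229)): if the tail of a lacunary signed sum is at
least `(1/2)·M_{l_H}`, then `l_H − l_{H+1} ≤ log_q(2K) + K·log_q(N)`. -/
theorem stmt_19 (q : ℝ) (hq : 1 < q) (M : ℕ → ℕ) (hMpos : ∀ n, 0 < M n)
    (hlac : ∀ n, q * M n ≤ M (n + 1)) (K N G : ℕ) (hK : 1 ≤ K) (hN : 1 ≤ N) (hG : 1 ≤ G)
    (l : ℕ → ℕ) (j : ℕ → ℤ) (δ : ℕ → ℕ) (H : ℕ) (hH : H + 1 ≤ K)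
    (hgap : l (H + 1) < l H)
    (hmono : ∀ k, H + 1 ≤ k → k < K → l (k + 1) ≤ l k)
    (hj : ∀ k, 1 ≤ k → k ≤ K → |j k| ≤ (N : ℤ) ^ K)
    (hδ : ∀ k, δ k ≤ 1)
    (htail : (1 / 2 : ℝ) * M (l H) ≤
      |∑ k ∈ Finset.Icc (H + 1) K, (-1 : ℝ) ^ δ k * (j k : ℝ) * M (l k)|) :
    (l H : ℝ) - l (H + 1) ≤ Real.logb q (2 * K) + K * Real.logb q N :=
  stmt_19_general q hq M hMpos hlac K N hN l j δ H hH hgap hmono hj htail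
end
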